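/- arXiv:2405.09309 — 8 statements merged into one kernel-verified Lean document; each statement's English description precedes it below -/
import Mathlib

section
/- Fix an integer q ≥ 2. For every sequence (ε_n) of positive reals with ε_n → 0 as n → ∞, there exists a sequence of (n, M_n) ID codes for the q-ary uniform permutation channel with M_n ≥ 2^{ε_n · n^{q−1}} messages, type-I error λ_{1,n} = 0 for every n, and type-II errors λ_{2,n} → 0 as n → ∞. -/
open Finset

/-- The type class of `x`: all vectors obtained from `x` by permuting its coordinates. -/
def typeClass (q n : ℕ) (x : Fin n → Fin q) : Finset (Fin n → Fin q) :=
  Finset.univ.filter fun y => ∃ σ : Equiv.Perm (Fin n), y = fun k => x (σ k)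

/-- `Q` is a probability mass function on a finite type. -/
def IsPMF {α : Type*} [Fintype α] (Q : α → ℝ) : Prop :=
  (∀ a, 0 ≤ Q a) ∧ ∑ a, Q a = 1

/-- False-acceptance probability `λ_{i→j}` of an `(n, M)` ID code for the `q`-ary
uniform permutation channel. -/
noncomputable def lamFA (q n : ℕ) {M : ℕ} (Q : Fin M → (Fin n → Fin q) → ℝ)
    (D : Fin M → Finset (Fin n → Fin q)) (i j : Fin M) : ℝ :=
  ∑ x, Q i x * (((typeClass q n x ∩ D j).card : ℝ) / ((typeClass q n x).card : ℝ))

/-- Missed-detection probability `λ_{i↛i}` of an `(n, M)` ID code for the `q`-ary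
uniform permutation channel. -/
noncomputable def lamMD (q n : ℕ) {M : ℕ} (Q : Fin M → (Fin n → Fin q) → ℝ)
    (D : Fin M → Finset (Fin n → Fin q)) (i : Fin M) : ℝ :=
  ∑ x, Q i x * (((typeClass q n x \ D i).card : ℝ) / ((typeClass q n x).card : ℝ))

/-!
Over `p + 1` letters there are at least `(n / p + 1) ^ p ≍ n ^ p` type classes, and the output
of the channel determines the type class of its input. Message `i` is sent as a uniformly
chosen codeword among `(a, F i a)`, `a < K`, each pair being realised by its own type, and `j`
is decoded on the union of the type classes of its codewords. Then the type-I error vanishes,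
and the type-II error `λ_{i→j}` is at most the fraction of positions where the words `F i` and
`F j` agree. A greedy (Gilbert–Varshamov) choice gives `2 ^ e` words of length `e + 1` over
`2 ^ l` letters agreeing pairwise in at most `(2e + 1) / l` positions, so `λ₂ ≤ 2 / l`. This
uses `(e + 1) * 2 ^ l` types; since `⌈ε_n n ^ p⌉ = o(n ^ p)`, `l` can be sent to infinity.
-/

open Filter Asymptotics

def typeOf {α : Type*} {n : ℕ} (x : Fin n → α) : Multiset α :=
  univ.val.map x

lemma typeOf_eq_of_mem_typeClass {q n : ℕ} {x y : Fin n → Fin q} (hy : y ∈ typeClass q n x) :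
    typeOf y = typeOf x := by
  obtain ⟨σ, rfl⟩ := (mem_filter.mp hy).2
  change Multiset.map (x ∘ σ) _ = _
  rw [← Multiset.map_map, Multiset.map_univ_val_equiv]; rfl

lemma exists_typeOf_eq {α : Type*} {n : ℕ} (s : Multiset α) (hs : Multiset.card s = n) :
    ∃ x : Fin n → α, typeOf x = s := by
  have hl : s.toList.length = n := by rw [Multiset.length_toList, hs]
  subst hl
  exact ⟨s.toList.get, by rw [typeOf, Fin.univ_val_map, List.ofFn_get, Multiset.coe_toList]⟩

noncomputable def empirical {α : Type*} [DecidableEq α] {K : ℕ} (x : Fin K → α) (y : α) : ℝ :=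
  (#{a | x a = y} : ℝ) / K

lemma sum_empirical_mul {α : Type*} [Fintype α] [DecidableEq α] {K : ℕ} (x : Fin K → α)
    (g : α → ℝ) :
    ∑ y, empirical x y * g y = (∑ a, g (x a)) / K := by
  simp only [empirical, div_mul_eq_mul_div, ← sum_div]
  congr 1
  rw [← sum_fiberwise univ x fun a => g (x a)]
  refine sum_congr rfl fun y _ => ?_
  rw [sum_congr rfl fun a ha => by rw [(mem_filter.mp ha).2], sum_const, nsmul_eq_mul]

lemma isPMF_empirical {α : Type*} [Fintype α] [DecidableEq α] {K : ℕ} (hK : 0 < K) (x : Fin K → α) :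
    IsPMF (empirical x) := by
  refine ⟨fun y => by unfold empirical; positivity, ?_⟩
  simpa [hK.ne'] using sum_empirical_mul x 1

def HasIDCode (q n M : ℕ) (lam : ℝ) : Prop :=
  ∃ (Q : Fin M → (Fin n → Fin q) → ℝ) (D : Fin M → Finset (Fin n → Fin q)),
    (∀ i, IsPMF (Q i)) ∧ (∀ i, lamMD q n Q D i = 0) ∧ ∀ i j, i ≠ j → lamFA q n Q D i j ≤ lam

lemma HasIDCode.mono {q n M : ℕ} {lam lam' : ℝ} (h : HasIDCode q n M lam) (hle : lam ≤ lam') :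
    HasIDCode q n M lam' :=
  let ⟨Q, D, hQ, hMD, hFA⟩ := h
  ⟨Q, D, hQ, hMD, fun i j hij => (hFA i j hij).trans hle⟩

lemma card_inter_div_card_le {β : Type*} [DecidableEq β] {P : Prop} [Decidable P]
    (T D : Finset β) (h : (T ∩ D).Nonempty → P) :
    (#(T ∩ D) / #T : ℝ) ≤ if P then 1 else 0 := by
  split_ifs with hP
  · exact div_le_one_of_le₀ (by exact_mod_cast card_le_card inter_subset_left) (Nat.cast_nonneg _)
  · simp [not_nonempty_iff_eq_empty.mp (mt h hP)]

theorem hasIDCode_of_codewords {q n M K t : ℕ} (hK : 0 < K) (x : Fin M → Fin K → Fin n → Fin q)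
    (hx : ∀ i j, i ≠ j → #{a | ∃ b, typeOf (x i a) = typeOf (x j b)} ≤ t) :
    HasIDCode q n M (t / K) := by
  refine ⟨fun i => empirical (x i), fun j => univ.biUnion fun b => typeClass q n (x j b),
    fun i => isPMF_empirical hK _, fun i => ?_, fun i j hij => ?_⟩
  · rw [lamMD, sum_empirical_mul]
    refine div_eq_zero_iff.mpr (Or.inl (sum_eq_zero fun a _ => ?_))
    rw [sdiff_eq_empty_iff_subset.mpr
      (subset_biUnion_of_mem (fun b => typeClass q n (x i b)) (mem_univ a))]
    simp
  · rw [lamFA, sum_empirical_mul]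
    gcongr
    calc _ ≤ ∑ a, if ∃ b, typeOf (x i a) = typeOf (x j b) then (1 : ℝ) else 0 :=
          sum_le_sum fun a _ => card_inter_div_card_le _ _ fun ⟨y, hy⟩ => by
            obtain ⟨hya, hyb⟩ := mem_inter.mp hy
            obtain ⟨b, -, hb⟩ := mem_biUnion.mp hyb
            exact ⟨b, (typeOf_eq_of_mem_typeClass hya).symm.trans (typeOf_eq_of_mem_typeClass hb)⟩
      _ ≤ t := by rw [sum_boole]; exact_mod_cast hx i j hij

lemma hasIDCode_one {q : ℕ} (hq : 0 < q) (n M : ℕ) : HasIDCode q n M 1 := by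
  simpa using hasIDCode_of_codewords (t := 1) one_pos (fun _ _ _ => (⟨0, hq⟩ : Fin q))
    fun _ _ _ => (card_le_univ _).trans (Fintype.card_fin 1).le

def typeWithCounts (p n : ℕ) (c : Fin p → ℕ) : Multiset (Fin (p + 1)) :=
  ∑ j, c j • {j.succ} + (n - ∑ j, c j) • {0}

lemma count_succ_typeWithCounts {p n : ℕ} (c : Fin p → ℕ) (k : Fin p) :
    (typeWithCounts p n c).count k.succ = c k := by
  simp [typeWithCounts, Multiset.count_sum', Multiset.count_singleton, Fin.succ_inj]

lemma card_typeWithCounts {p n : ℕ} (c : Fin p → ℕ) (hc : ∑ j, c j ≤ n) :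
    Multiset.card (typeWithCounts p n c) = n := by
  simp [typeWithCounts, Multiset.card_sum, hc]

lemma exists_injective_typeOf_comp {ι : Type*} [Fintype ι] {p n : ℕ}
    (hι : Fintype.card ι ≤ (n / p + 1) ^ p) :
    ∃ rep : ι → Fin n → Fin (p + 1), Function.Injective (typeOf ∘ rep) := by
  obtain ⟨e⟩ : Nonempty (ι ↪ (Fin p → Fin (n / p + 1))) :=
    Function.Embedding.nonempty_of_card_le (by simpa using hι)
  have hcard : ∀ i, Multiset.card (typeWithCounts p n fun j => e i j) = n := fun i =>
    card_typeWithCounts _ <| calc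
      ∑ j, (e i j : ℕ) ≤ ∑ _j : Fin p, n / p := sum_le_sum fun j _ => Nat.lt_succ_iff.mp (e i j).2
      _ ≤ n := by simpa [mul_comm] using Nat.div_mul_le_self n p
  choose rep hrep using fun i => exists_typeOf_eq _ (hcard i)
  refine ⟨rep, fun i i' h => e.injective (funext fun j => Fin.ext ?_)⟩
  simpa [hrep, count_succ_typeWithCounts] using congrArg (Multiset.count j.succ) h

lemma exists_pairwise_not_rel {β : Type*} [Fintype β] (R : β → β → Prop) [DecidableRel R]
    (hR : ∀ f g, R f g → R g f) {W : ℕ} (hW : ∀ g, #{f | R f g} ≤ W) :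
    ∀ M, M * W < Fintype.card β → ∃ F : Fin M → β, Pairwise fun i j => ¬ R (F i) (F j)
  | 0, _ => ⟨Fin.elim0, fun i => i.elim0⟩
  | M + 1, hM => by
    classical
    obtain ⟨F, hF⟩ := exists_pairwise_not_rel R hR hW M (by nlinarith)
    have hbad : #(univ.biUnion fun i => ({f | R f (F i)} : Finset β)) < Fintype.card β :=
      calc _ ≤ ∑ i, #({f | R f (F i)} : Finset β) := card_biUnion_le
        _ ≤ ∑ _i : Fin M, W := sum_le_sum fun i _ => hW (F i)
        _ = M * W := by simp
        _ < Fintype.card β := by nlinarith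
    obtain ⟨g, -, hg⟩ := exists_mem_notMem_of_card_lt_card hbad
    have hgF : ∀ i, ¬ R g (F i) := fun i h =>
      hg (mem_biUnion.mpr ⟨i, mem_univ i, mem_filter.mpr ⟨mem_univ g, h⟩⟩)
    refine ⟨Fin.snoc F g, fun i j hij => ?_⟩
    cases i using Fin.lastCases <;> cases j using Fin.lastCases <;>
      simp only [Fin.snoc_castSucc, Fin.snoc_last]
    · exact absurd rfl hij
    · exact hgF _
    · exact fun h => hgF _ (hR _ _ h)
    · exact hF fun h => hij (congrArg _ h)

lemma card_filter_le_card_agree_le {K L : ℕ} (s : ℕ) (g : Fin K → Fin L) :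
    #{f : Fin K → Fin L | s ≤ #{a | f a = g a}} ≤ K.choose s * L ^ (K - s) := by
  classical
  let agreeOn (A : Finset (Fin K)) := Fintype.piFinset fun a => if a ∈ A then {g a} else univ
  have hsub : ({f | s ≤ #{a | f a = g a}} : Finset (Fin K → Fin L)) ⊆
      (powersetCard s univ).biUnion agreeOn := by
    intro f hf
    obtain ⟨A, hA, hAs⟩ := exists_subset_card_eq (mem_filter.mp hf).2
    refine mem_biUnion.mpr ⟨A, mem_powersetCard.mpr ⟨subset_univ A, hAs⟩, ?_⟩
    refine Fintype.mem_piFinset.mpr fun a => ?_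
    split_ifs with ha
    · exact mem_singleton.mpr (mem_filter.mp (hA ha)).2
    · exact mem_univ _
  have hcard : ∀ A ∈ powersetCard s univ, #(agreeOn A) = L ^ (K - s) := fun A hA => by
    simp only [agreeOn, Fintype.card_piFinset, apply_ite card, card_singleton, card_univ,
      Fintype.card_fin]
    rw [prod_ite, prod_const_one, one_mul, prod_const, filter_notMem_eq_sdiff,
      card_sdiff_of_subset (subset_univ A)]
    simp [(mem_powersetCard.mp hA).2]
  calc _ ≤ _ := card_le_card hsub
    _ ≤ _ := card_biUnion_le
    _ = _ := by
      rw [sum_congr rfl hcard, sum_const, card_powersetCard, card_univ, Fintype.card_fin,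
        smul_eq_mul]

lemma two_pow_mul_choose_mul_lt {e K l s : ℕ} (h : e + K < l * s) :
    2 ^ e * (K.choose s * (2 ^ l) ^ (K - s)) < (2 ^ l) ^ K := by
  rcases lt_or_ge K s with hKs | hsK
  · simp [Nat.choose_eq_zero_of_lt hKs]
  calc 2 ^ e * (K.choose s * (2 ^ l) ^ (K - s)) ≤ 2 ^ e * (2 ^ K * 2 ^ (l * (K - s))) := by
        rw [← pow_mul]
        exact Nat.mul_le_mul_left _ (Nat.mul_le_mul_right _ (Nat.choose_le_two_pow K s))
    _ = 2 ^ (e + K + l * (K - s)) := by rw [pow_add, pow_add, mul_assoc]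
    _ < 2 ^ (l * K) := Nat.pow_lt_pow_right one_lt_two <| by
        have : l * (K - s) + l * s = l * K := by rw [← mul_add, Nat.sub_add_cancel hsK]
        omega
    _ = (2 ^ l) ^ K := pow_mul 2 l K

theorem hasIDCode_two_pow {p n e l : ℕ} (hl : 1 ≤ l) (h : (e + 1) * 2 ^ l ≤ (n / p + 1) ^ p) :
    HasIDCode (p + 1) n (2 ^ e) (2 / l) := by
  have hlt : e + (e + 1) < l * ((2 * e + 1) / l + 1) := by
    rw [show e + (e + 1) = 2 * e + 1 by ring]; exact Nat.lt_mul_div_succ _ hl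
  have hle : (2 * e + 1) / l * l ≤ 2 * (e + 1) := (Nat.div_mul_le_self _ l).trans (by omega)
  generalize (2 * e + 1) / l = t at hlt hle
  obtain ⟨rep, hrep⟩ :=
    exists_injective_typeOf_comp (ι := Fin (e + 1) × Fin (2 ^ l)) (p := p) (by simpa using h)
  obtain ⟨F, hF⟩ := exists_pairwise_not_rel
    (fun f g : Fin (e + 1) → Fin (2 ^ l) => t + 1 ≤ #{a | f a = g a})
    (fun f g h => by simpa only [eq_comm] using h) (card_filter_le_card_agree_le (t + 1)) (2 ^ e)
    ((two_pow_mul_choose_mul_lt hlt).trans_eq (by simp))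
  have hcode := hasIDCode_of_codewords (t := t) (Nat.succ_pos e) (fun i a => rep (a, F i a))
    fun i j hij => by
      refine (card_le_card fun a ha => ?_).trans (Nat.lt_succ_iff.mp (not_le.mp (hF hij)))
      obtain ⟨b, hb⟩ := (mem_filter.mp ha).2
      obtain ⟨rfl, hab⟩ := Prod.mk.inj (hrep hb)
      exact mem_filter.mpr ⟨mem_univ a, hab⟩
  refine hcode.mono ?_
  rw [div_le_div_iff₀ (by positivity) (by exact_mod_cast hl)]
  exact_mod_cast hle

lemma isLittleO_ceil_mul_pow {ε : ℕ → ℝ} (hε : Tendsto ε atTop (nhds 0)) {p : ℕ} (hp : p ≠ 0) :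
    (fun n : ℕ => (⌈ε n * n ^ p⌉₊ + 1 : ℝ)) =o[atTop] fun n => (n : ℝ) ^ p := by
  have hεo : (fun n : ℕ => ε n * n ^ p) =o[atTop] fun n => (n : ℝ) ^ p := by
    simpa using ((isLittleO_one_iff ℝ).mpr hε).mul_isBigO (isBigO_refl (fun n : ℕ => (n : ℝ) ^ p) _)
  have h2o : (fun _ : ℕ => (2 : ℝ)) =o[atTop] fun n => (n : ℝ) ^ p :=
    isLittleO_const_left.mpr <| Or.inr <|
      tendsto_norm_atTop_atTop.comp ((tendsto_pow_atTop hp).comp tendsto_natCast_atTop_atTop)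
  refine IsBigO.trans_isLittleO (IsBigO.of_bound 1 (Eventually.of_forall fun n => ?_))
    (hεo.norm_left.add h2o)
  have hceil : (⌈ε n * n ^ p⌉₊ : ℝ) < ‖ε n * n ^ p‖ + 1 :=
    (Nat.cast_le.mpr (Nat.ceil_mono (Real.le_norm_self _))).trans_lt
      (Nat.ceil_lt_add_one (norm_nonneg _))
  rw [one_mul, Real.norm_of_nonneg (by positivity), Real.norm_of_nonneg (by positivity)]
  linarith

lemma pow_isBigO_div_add_one_pow {p : ℕ} (hp : p ≠ 0) :
    (fun n : ℕ => (n : ℝ) ^ p) =O[atTop] fun n => (((n / p + 1) ^ p : ℕ) : ℝ) := by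
  refine IsBigO.of_bound (p ^ p) (Eventually.of_forall fun n => ?_)
  have : n ^ p ≤ p ^ p * (n / p + 1) ^ p := by
    rw [← mul_pow]; exact Nat.pow_le_pow_left (Nat.lt_mul_div_succ n (Nat.pos_of_ne_zero hp)).le p
  simp only [norm_pow, RCLike.norm_natCast]
  exact_mod_cast this

lemma eventually_ceil_mul_pow_mul_le {ε : ℕ → ℝ} (hε : Tendsto ε atTop (nhds 0)) {p : ℕ}
    (hp : p ≠ 0) (c : ℕ) :
    ∀ᶠ n in atTop, (⌈ε n * n ^ p⌉₊ + 1) * 2 ^ c ≤ (n / p + 1) ^ p := by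
  filter_upwards [((isLittleO_ceil_mul_pow hε hp).trans_isBigO
    (pow_isBigO_div_add_one_pow hp)).bound (inv_pos.mpr (pow_pos two_pos c))] with n hn
  rw [Real.norm_of_nonneg (by positivity), Real.norm_of_nonneg (by positivity),
    ← div_eq_inv_mul, le_div_iff₀ (by positivity)] at hn
  exact_mod_cast hn

theorem oneShotAchievability_general (q : ℕ) (hq : 2 ≤ q)
    (ε : ℕ → ℝ)
    (hε : Filter.Tendsto ε Filter.atTop (nhds 0)) :
    ∃ (M : ℕ → ℕ) (Q : ∀ n, Fin (M n) → (Fin n → Fin q) → ℝ)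
      (D : ∀ n, Fin (M n) → Finset (Fin n → Fin q)) (lam2 : ℕ → ℝ),
      (∀ n, (2 : ℝ) ^ (ε n * (n : ℝ) ^ (q - 1)) ≤ (M n : ℝ)) ∧
      (∀ n i, IsPMF (Q n i)) ∧
      (∀ n i, lamMD q n (Q n) (D n) i = 0) ∧
      (∀ n i j, i ≠ j → lamFA q n (Q n) (D n) i j ≤ lam2 n) ∧
      Filter.Tendsto lam2 Filter.atTop (nhds 0) := by
  obtain ⟨p, rfl⟩ : ∃ p, q = p + 1 := ⟨q - 1, by omega⟩
  have hp : p ≠ 0 := by omega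
  simp only [Nat.add_sub_cancel]
  let e n := ⌈ε n * n ^ p⌉₊
  let l n := Nat.findGreatest (fun l => (e n + 1) * 2 ^ l ≤ (n / p + 1) ^ p) n
  have hl : Tendsto l atTop atTop := tendsto_atTop.mpr fun c =>
    ((eventually_ceil_mul_pow_mul_le hε hp c).and (eventually_ge_atTop c)).mono
      fun n h => Nat.le_findGreatest h.2 h.1
  -- `l n = 0` also when no `l` is admissible; the trivial code serves those `n`.
  have hcode (n : ℕ) : HasIDCode (p + 1) n (2 ^ e n) (if l n = 0 then 1 else 2 / l n) := by
    split_ifs with h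
    · exact hasIDCode_one p.succ_pos n _
    · exact hasIDCode_two_pow (Nat.pos_of_ne_zero h)
        (Nat.findGreatest_of_ne_zero (P := fun l => (e n + 1) * 2 ^ l ≤ (n / p + 1) ^ p) rfl h)
  choose Q D hQ hMD hFA using hcode
  refine ⟨fun n => 2 ^ e n, Q, D, _, fun n => ?_, hQ, hMD, hFA, ?_⟩
  · rw [Nat.cast_pow, Nat.cast_ofNat]
    exact (Real.rpow_le_rpow_of_exponent_le one_le_two (Nat.le_ceil _)).trans_eq
      (Real.rpow_natCast 2 _)
  · refine ((tendsto_const_nhds (x := (2 : ℝ))).div_atTop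
      (tendsto_natCast_atTop_atTop.comp hl)).congr' ?_
    filter_upwards [hl.eventually_ge_atTop 1] with n hn
    simp [Nat.one_le_iff_ne_zero.mp hn]

/-- Achievability (one-shot): for every `ε_n → 0` with `ε_n > 0` there is a sequence of
`(n, M_n)` ID codes for the `q`-ary uniform permutation channel with
`M_n ≥ 2^(ε_n · n^(q-1))`, zero type-I error, and type-II error tending to `0`. -/
theorem oneShotAchievability (q : ℕ) (hq : 2 ≤ q)
    (ε : ℕ → ℝ) (hεpos : ∀ n, 0 < ε n)
    (hε : Filter.Tendsto ε Filter.atTop (nhds 0)) :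
    ∃ (M : ℕ → ℕ) (Q : ∀ n, Fin (M n) → (Fin n → Fin q) → ℝ)
      (D : ∀ n, Fin (M n) → Finset (Fin n → Fin q)) (lam2 : ℕ → ℝ),
      (∀ n, (2 : ℝ) ^ (ε n * (n : ℝ) ^ (q - 1)) ≤ (M n : ℝ)) ∧
      (∀ n i, IsPMF (Q n i)) ∧
      (∀ n i, lamMD q n (Q n) (D n) i = 0) ∧
      (∀ n i j, i ≠ j → lamFA q n (Q n) (D n) i j ≤ lam2 n) ∧
      Filter.Tendsto lam2 Filter.atTop (nhds 0) :=
  oneShotAchievability_general q hq ε hε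
end

section
/- Fix an integer q ≥ 2 and reals μ > 0 and R > 0. There does not exist a sequence of (n_i, M_i) ID codes for the q-ary uniform permutation channel with n_i → ∞, M_i ≥ 2^{R · n_i^{q−1}}, and error probabilities satisfying λ_{1,i} < n_i^{−μ} and λ_{2,i} < n_i^{−μ} for all i. Equivalently, for any such sequence of codes with n_i → ∞ and M_i ≥ 2^{R · n_i^{q−1}}, there exists an index i with max(λ_{1,i}, λ_{2,i}) ≥ n_i^{−μ}. -/
open Finset

open Filter

lemma mem_typeClass_iff {q n : ℕ} {x y : Fin n → Fin q} :
    y ∈ typeClass q n x ↔ ∃ σ : Equiv.Perm (Fin n), y = fun k => x (σ k) := by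
  simp [typeClass]

lemma mem_typeClass_self {q n : ℕ} (x : Fin n → Fin q) : x ∈ typeClass q n x :=
  mem_typeClass_iff.mpr ⟨Equiv.refl _, rfl⟩

lemma typeClass_card_pos {q n : ℕ} (x : Fin n → Fin q) : 0 < (typeClass q n x).card :=
  Finset.card_pos.mpr ⟨x, mem_typeClass_self x⟩

lemma typeClass_eq_of_mem {q n : ℕ} {x y : Fin n → Fin q} (h : y ∈ typeClass q n x) :
    typeClass q n y = typeClass q n x := by
  obtain ⟨σ, rfl⟩ := mem_typeClass_iff.mp h
  ext z
  simp only [mem_typeClass_iff]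
  constructor
  · rintro ⟨τ, rfl⟩
    exact ⟨τ.trans σ, rfl⟩
  · rintro ⟨τ, rfl⟩
    refine ⟨τ.trans σ.symm, ?_⟩
    funext k
    simp

/-- The count vector (type) of a word. -/
def ctype (q n : ℕ) (x : Fin n → Fin q) (a : Fin q) : ℕ :=
  (Finset.univ.filter fun k => x k = a).card

lemma ctype_eq_of_mem {q n : ℕ} {x y : Fin n → Fin q} (h : y ∈ typeClass q n x) :
    ctype q n y = ctype q n x := by
  obtain ⟨σ, rfl⟩ := mem_typeClass_iff.mp h
  funext a
  unfold ctype
  apply Finset.card_bij' (fun k _ => σ k) (fun k _ => σ.symm k)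
  · intro k hk; simp only [mem_filter, mem_univ, true_and] at hk ⊢; exact hk
  · intro k hk; simp only [mem_filter, mem_univ, true_and] at hk ⊢; simpa using hk
  · intro k _; simp
  · intro k _; simp

lemma sum_ctype {q n : ℕ} (x : Fin n → Fin q) : ∑ a, ctype q n x a = n := by
  classical
  have := Finset.card_eq_sum_card_fiberwise (f := x) (s := Finset.univ) (t := Finset.univ)
    (fun k _ => Finset.mem_univ (x k))
  simpa [ctype, Finset.card_univ] using this.symm

lemma mem_typeClass_of_ctype_eq {q n : ℕ} {x y : Fin n → Fin q}
    (h : ctype q n x = ctype q n y) : y ∈ typeClass q n x := by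
  classical
  have hcard : ∀ a : Fin q, Fintype.card {k // y k = a} = Fintype.card {k // x k = a} := by
    intro a
    rw [Fintype.card_subtype, Fintype.card_subtype]
    exact (congrFun h a).symm
  let e : ∀ a : Fin q, {k // y k = a} ≃ {k // x k = a} :=
    fun a => Fintype.equivOfCardEq (hcard a)
  let σ : Equiv.Perm (Fin n) :=
    ((Equiv.sigmaFiberEquiv y).symm.trans (Equiv.sigmaCongrRight e)).trans
      (Equiv.sigmaFiberEquiv x)
  refine mem_typeClass_iff.mpr ⟨σ, ?_⟩
  funext k
  have hσ : σ k = (e (y k) ⟨k, rfl⟩ : {k' // x k' = y k}).1 := rfl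
  rw [hσ]
  exact ((e (y k) ⟨k, rfl⟩).2).symm

lemma ctype_le {q n : ℕ} (x : Fin n → Fin q) (a : Fin q) : ctype q n x a ≤ n := by
  have := Finset.card_filter_le (Finset.univ : Finset (Fin n)) (fun k => x k = a)
  simpa [ctype] using this

lemma ctype_eq_of_agree_off_last {q n : ℕ} (hq : 2 ≤ q) {x y : Fin n → Fin q}
    (h : ∀ a : Fin q, (a : ℕ) < q - 1 → ctype q n x a = ctype q n y a) :
    ctype q n x = ctype q n y := by
  have hlast : (⟨q-1, by omega⟩ : Fin q) = ⟨q-1, by omega⟩ := rfl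
  set last : Fin q := ⟨q-1, by omega⟩ with hl
  have hoff : ∀ a ∈ Finset.univ.erase last, ctype q n x a = ctype q n y a := by
    intro a ha
    apply h
    have hne : a ≠ last := (Finset.mem_erase.mp ha).1
    have : (a:ℕ) < q := a.isLt
    have : (a:ℕ) ≠ q - 1 := by
      intro hc
      apply hne
      apply Fin.ext
      simpa using hc
    omega
  have hx := Finset.sum_erase_add Finset.univ (ctype q n x) (Finset.mem_univ last)
  have hy := Finset.sum_erase_add Finset.univ (ctype q n y) (Finset.mem_univ last)
  rw [sum_ctype] at hx hy
  have hsum : ∑ a ∈ Finset.univ.erase last, ctype q n x a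
      = ∑ a ∈ Finset.univ.erase last, ctype q n y a := Finset.sum_congr rfl hoff
  have hlasteq : ctype q n x last = ctype q n y last := by omega
  funext a
  by_cases hc : a = last
  · rw [hc]; exact hlasteq
  · exact hoff a (Finset.mem_erase.mpr ⟨hc, Finset.mem_univ _⟩)

lemma card_types_le {q n : ℕ} (hq : 2 ≤ q) :
    ((Finset.univ : Finset (Fin n → Fin q)).image (typeClass q n)).card ≤ (n+1)^(q-1) := by
  classical
  set 𝒯 := (Finset.univ : Finset (Fin n → Fin q)).image (typeClass q n) with h𝒯
  -- the normalized count vector of a class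
  set g : Finset (Fin n → Fin q) → (Fin (q-1) → Fin (n+1)) :=
    fun C a => ⟨(∑ y ∈ C, ctype q n y (Fin.castLE (by omega) a)) / C.card, by
      have h1 : ∑ y ∈ C, ctype q n y (Fin.castLE (by omega) a) ≤ C.card * n := by
        calc ∑ y ∈ C, ctype q n y (Fin.castLE (by omega) a) ≤ ∑ _y ∈ C, n :=
              Finset.sum_le_sum fun y _ => ctype_le y _
          _ = C.card * n := by rw [Finset.sum_const]; ring
      rcases Nat.eq_zero_or_pos C.card with h0 | h0
      · simp [h0]
      · have := Nat.div_le_div_right (c := C.card) h1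
        rw [Nat.mul_div_cancel_left _ h0] at this
        omega⟩ with hg
  have hgval : ∀ x : Fin n → Fin q, ∀ a : Fin (q-1),
      (g (typeClass q n x) a : ℕ) = ctype q n x (Fin.castLE (by omega) a) := by
    intro x a
    have hconst : ∑ y ∈ typeClass q n x, ctype q n y (Fin.castLE (by omega) a)
        = (typeClass q n x).card * ctype q n x (Fin.castLE (by omega) a) := by
      rw [Finset.sum_congr rfl (fun y hy => by rw [ctype_eq_of_mem hy]), Finset.sum_const,
        smul_eq_mul]
    show (∑ y ∈ typeClass q n x, ctype q n y (Fin.castLE (by omega) a)) /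
        (typeClass q n x).card = _
    rw [hconst, Nat.mul_div_cancel_left _ (typeClass_card_pos x)]
  have hinj : Set.InjOn g 𝒯 := by
    intro C hC C' hC' hgeq
    rw [h𝒯, Finset.coe_image] at hC hC'
    obtain ⟨x, _, rfl⟩ := hC
    obtain ⟨y, _, rfl⟩ := hC'
    have hagree : ∀ a : Fin q, (a : ℕ) < q - 1 → ctype q n x a = ctype q n y a := by
      intro a ha
      have := congrFun hgeq ⟨a, ha⟩
      have h1 := hgval x ⟨a, ha⟩
      have h2 := hgval y ⟨a, ha⟩
      have hcast : Fin.castLE (by omega : q - 1 ≤ q) (⟨(a:ℕ), ha⟩ : Fin (q-1)) = a := by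
        apply Fin.ext; rfl
      rw [hcast] at h1 h2
      rw [← h1, ← h2, this]
    have := ctype_eq_of_agree_off_last hq hagree
    exact (typeClass_eq_of_mem (mem_typeClass_of_ctype_eq this)).symm
  calc 𝒯.card ≤ Fintype.card (Fin (q-1) → Fin (n+1)) := by
        have := Finset.card_le_card_of_injOn g (fun C _ => Finset.mem_univ (g C)) hinj
        simpa using this
    _ = (n+1)^(q-1) := by simp [Fintype.card_fun]

lemma sum_choose_le (N : ℕ) : ∀ s : ℕ, ∑ k ∈ Finset.range (s+1), N.choose k ≤ (N+1)^s := by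
  intro s
  induction s with
  | zero => simp
  | succ s ih =>
    rw [Finset.sum_range_succ]
    have h1 : N.choose (s+1) ≤ N^(s+1) := Nat.choose_le_pow _ _
    have h2 : N^(s+1) ≤ N * (N+1)^s := by
      rw [pow_succ]
      calc N^s * N ≤ (N+1)^s * N := by
            exact Nat.mul_le_mul_right _ (Nat.pow_le_pow_left (Nat.le_succ _) _)
        _ = N * (N+1)^s := by ring
    calc ∑ k ∈ Finset.range (s+1), N.choose k + N.choose (s+1)
        ≤ (N+1)^s + N * (N+1)^s := Nat.add_le_add ih (h1.trans h2)
      _ = (N+1)^(s+1) := by ring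

lemma exists_max_subset {α : Type*} [DecidableEq α] (w : α → ℝ) :
    ∀ (k : ℕ) (G : Finset α), ∃ F, F ⊆ G ∧ F.card = min k G.card ∧
      ∀ c ∈ G, c ∉ F → ∀ d ∈ F, w c ≤ w d := by
  intro k
  induction k with
  | zero => intro G; exact ⟨∅, Finset.empty_subset _, by simp, by simp⟩
  | succ k ih =>
    intro G
    rcases G.eq_empty_or_nonempty with rfl | hne
    · exact ⟨∅, Finset.empty_subset _, by simp, by simp⟩
    · obtain ⟨d, hd, hmax⟩ := G.exists_max_image w hne
      obtain ⟨F', hF'sub, hF'card, hF'max⟩ := ih (G.erase d)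
      have hdF' : d ∉ F' := fun h => (Finset.mem_erase.mp (hF'sub h)).1 rfl
      refine ⟨insert d F', ?_, ?_, ?_⟩
      · exact Finset.insert_subset hd (hF'sub.trans (Finset.erase_subset _ _))
      · rw [Finset.card_insert_of_notMem hdF', hF'card,
          Finset.card_erase_of_mem hd]
        have hG1 : 1 ≤ G.card := Finset.card_pos.mpr hne
        omega
      · intro c hc hcF e he
        rcases Finset.mem_insert.mp he with rfl | heF'
        · exact hmax c hc
        · have hc' : c ∈ G.erase d := Finset.mem_erase.mpr
            ⟨fun h => hcF (h ▸ Finset.mem_insert_self _ _), hc⟩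
          exact hF'max c hc' (fun h => hcF (Finset.mem_insert_of_mem h)) e heF'

lemma core_count {α β : Type*} [DecidableEq α] [Fintype β] [DecidableEq β]
    (𝒯 : Finset α) (w : β → α → ℝ) (G : β → Finset α) (lam : ℝ)
    (hlam : 0 < lam) (hlam6 : lam ≤ 1/6)
    (hw : ∀ j C, 0 ≤ w j C) (hG : ∀ j, G j ⊆ 𝒯)
    (hone : ∀ j, 1 - lam ≤ ∑ C ∈ G j, w j C)
    (htwo : ∀ j k, j ≠ k → ∑ C ∈ G k, w j C ≤ lam)
    (s : ℕ) (hs : 2 * lam * 𝒯.card < s) :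
    Fintype.card β ≤ ∑ k ∈ Finset.range (s+1), 𝒯.card.choose k := by
  have hs0 : 0 < s := by
    rcases Nat.eq_zero_or_pos s with rfl | h
    · exfalso
      have : (0:ℝ) ≤ 2 * lam * 𝒯.card := by positivity
      simp only [Nat.cast_zero] at hs; linarith
    · exact h
  have hsR : (0:ℝ) < s := by exact_mod_cast hs0
  have key : ∀ j : β, ∃ F : Finset α, F ⊆ G j ∧ F.card ≤ s ∧ lam < ∑ C ∈ F, w j C := by
    intro j
    obtain ⟨F, hFsub, hFcard, hFmax⟩ := exists_max_subset (w j) s (G j)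
    have hcardle : F.card ≤ s := hFcard ▸ min_le_left _ _
    refine ⟨F, hFsub, hcardle, ?_⟩
    rcases le_or_gt (G j).card s with hle | hlt
    · -- F = G j
      have : F = G j := by
        apply Finset.eq_of_subset_of_card_le hFsub
        rw [hFcard]; omega
      rw [this]
      have := hone j
      linarith
    · -- F.card = s
      have hFs : F.card = s := by rw [hFcard]; omega
      by_contra hcon
      push_neg at hcon
      -- every element outside F has small weight
      have hout : ∀ c ∈ G j \ F, w j c ≤ lam / s := by
        intro c hc
        rw [Finset.mem_sdiff] at hc
        have hbound : (s:ℝ) * w j c ≤ ∑ C ∈ F, w j C := by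
          calc (s:ℝ) * w j c = ∑ _C ∈ F, w j c := by
                rw [Finset.sum_const, hFs]; ring
            _ ≤ ∑ C ∈ F, w j C := Finset.sum_le_sum fun d hd => hFmax c hc.1 hc.2 d hd
        have h' : (s:ℝ) * w j c ≤ lam := hbound.trans hcon
        rw [le_div_iff₀ hsR, mul_comm]
        exact h'
      have hsplit : ∑ C ∈ G j \ F, w j C + ∑ C ∈ F, w j C = ∑ C ∈ G j, w j C :=
        Finset.sum_sdiff hFsub
      have hsdcard : ((G j \ F).card : ℝ) ≤ (𝒯.card : ℝ) := by
        exact_mod_cast Finset.card_le_card ((Finset.sdiff_subset).trans (hG j))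
      have hsd : ∑ C ∈ G j \ F, w j C ≤ (𝒯.card : ℝ) * (lam / s) := by
        calc ∑ C ∈ G j \ F, w j C ≤ ∑ _C ∈ G j \ F, lam / s :=
              Finset.sum_le_sum hout
          _ = ((G j \ F).card : ℝ) * (lam / s) := by rw [Finset.sum_const]; ring
          _ ≤ (𝒯.card : ℝ) * (lam / s) := by
              apply mul_le_mul_of_nonneg_right hsdcard
              positivity
      have hhalf : (𝒯.card : ℝ) * (lam / s) < 1/2 := by
        rw [mul_div_assoc', div_lt_iff₀ hsR]
        nlinarith
      have := hone j
      linarith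
  choose F hFsub hFcard hFbig using key
  have hinj : Set.InjOn F (Finset.univ : Finset β) := by
    intro j _ k _ hjk
    by_contra hne
    have h1 : lam < ∑ C ∈ F j, w j C := hFbig j
    have h2 : ∑ C ∈ F j, w j C ≤ ∑ C ∈ G k, w j C := by
      rw [hjk]
      exact Finset.sum_le_sum_of_subset_of_nonneg (hFsub k) fun C hC _ => hw j C
    have h3 : ∑ C ∈ G k, w j C ≤ lam := htwo j k hne
    linarith
  have hmaps : ∀ j : β, F j ∈ 𝒯.powerset.filter fun A => A.card ≤ s := by
    intro j
    rw [Finset.mem_filter, Finset.mem_powerset]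
    exact ⟨(hFsub j).trans (hG j), hFcard j⟩
  have hcard1 : Fintype.card β ≤ (𝒯.powerset.filter fun A => A.card ≤ s).card := by
    rw [← Finset.card_univ]
    exact Finset.card_le_card_of_injOn F (fun j _ => hmaps j) hinj
  have hsub : (𝒯.powerset.filter fun A => A.card ≤ s) ⊆
      (Finset.range (s+1)).biUnion fun k => Finset.powersetCard k 𝒯 := by
    intro A hA
    rw [Finset.mem_filter, Finset.mem_powerset] at hA
    rw [Finset.mem_biUnion]
    exact ⟨A.card, Finset.mem_range.mpr (by omega), Finset.mem_powersetCard.mpr ⟨hA.1, rfl⟩⟩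
  calc Fintype.card β ≤ _ := hcard1
    _ ≤ ((Finset.range (s+1)).biUnion fun k => Finset.powersetCard k 𝒯).card :=
        Finset.card_le_card hsub
    _ ≤ ∑ k ∈ Finset.range (s+1), (Finset.powersetCard k 𝒯).card :=
        Finset.card_biUnion_le
    _ = ∑ k ∈ Finset.range (s+1), 𝒯.card.choose k := by
        simp [Finset.card_powersetCard]

lemma eventually_good (q : ℕ) (μ R : ℝ) (hμ : 0 < μ) (hR : 0 < R) :
    ∀ᶠ m : ℕ in atTop, 2 ≤ m ∧ (m:ℝ)^(-μ) ≤ 1/12 ∧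
      ((2:ℝ)^(q+1)+1) * q * ((1+Real.logb 2 m) * (m:ℝ)^(-(min μ 1))) < R := by
  have hμ' : 0 < min μ 1 := lt_min hμ one_pos
  set μ' := min μ 1 with hμ'def
  -- real tendsto
  have hbase : Filter.Tendsto (fun x : ℝ => (1 + Real.logb 2 x) * x ^ (-μ')) atTop (nhds 0) := by
    have ha : Filter.Tendsto (fun x : ℝ => x ^ (-μ')) atTop (nhds 0) :=
      tendsto_rpow_neg_atTop hμ'
    have hb : Filter.Tendsto (fun x : ℝ => Real.log x / x ^ μ') atTop (nhds 0) :=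
      (isLittleO_log_rpow_atTop hμ').tendsto_div_nhds_zero
    have hc : Filter.Tendsto
        (fun x : ℝ => x ^ (-μ') + (Real.log 2)⁻¹ * (Real.log x / x ^ μ')) atTop (nhds 0) := by
      have := ha.add (hb.const_mul (Real.log 2)⁻¹)
      simpa using this
    apply hc.congr'
    filter_upwards [eventually_ge_atTop (1:ℝ)] with x hx
    have hx0 : (0:ℝ) ≤ x := by linarith
    rw [Real.rpow_neg hx0, Real.logb]
    field_simp
  have hnat : Filter.Tendsto
      (fun m : ℕ => ((2:ℝ)^(q+1)+1) * q * ((1+Real.logb 2 m) * (m:ℝ)^(-μ'))) atTop (nhds 0) := by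
    have := (hbase.comp tendsto_natCast_atTop_atTop).const_mul (((2:ℝ)^(q+1)+1) * q)
    simpa [Function.comp] using this
  have h3 := hnat.eventually_lt_const hR
  have h2 : Filter.Tendsto (fun m : ℕ => (m:ℝ)^(-μ)) atTop (nhds 0) :=
    (tendsto_rpow_neg_atTop hμ).comp tendsto_natCast_atTop_atTop
  have h2' := h2.eventually_le_const (by norm_num : (0:ℝ) < 1/12)
  filter_upwards [eventually_ge_atTop 2, h2', h3] with m hm ha hb
  exact ⟨hm, ha, hb⟩

set_option maxHeartbeats 1000000 in
/-- Per-index counting bound: an ID code with type-I/II errors below `lam₀ ≤ 1/12`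
has at most `(N+1)^s` messages where `N` is the number of type classes. -/
lemma perIndexCount (q nn Mi : ℕ) (lam₀ : ℝ)
    (Q : Fin Mi → (Fin nn → Fin q) → ℝ) (D : Fin Mi → Finset (Fin nn → Fin q))
    (hQ : ∀ j, IsPMF (Q j))
    (hlam₀pos : 0 < lam₀) (hlam₀ : lam₀ ≤ 1/12)
    (hmd : ∀ j, lamMD q nn Q D j < lam₀)
    (hfa : ∀ j k, j ≠ k → lamFA q nn Q D j k < lam₀) :
    Mi ≤ (((Finset.univ : Finset (Fin nn → Fin q)).image (typeClass q nn)).card + 1) ^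
      (⌊2 * (2*lam₀) * ((((Finset.univ : Finset (Fin nn → Fin q)).image
        (typeClass q nn)).card : ℕ) : ℝ)⌋₊ + 1) := by
  classical
  set lam : ℝ := 2 * lam₀ with hlamdef
  have hlampos : 0 < lam := by positivity
  have hlam6 : lam ≤ 1/6 := by rw [hlamdef]; linarith
  set fI : Fin Mi → (Fin nn → Fin q) → ℝ := fun j x =>
    ((typeClass q nn x ∩ D j).card : ℝ) / ((typeClass q nn x).card : ℝ) with hfIdef
  have hTpos : ∀ x : (Fin nn → Fin q), (0:ℝ) < ((typeClass q nn x).card : ℝ) := by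
    intro x; exact_mod_cast typeClass_card_pos x
  have hfI0 : ∀ j x, 0 ≤ fI j x := by
    intro j x; apply div_nonneg <;> positivity
  have hfI1 : ∀ j x, fI j x ≤ 1 := by
    intro j x
    rw [hfIdef, div_le_one (hTpos x)]
    exact_mod_cast Finset.card_le_card (Finset.inter_subset_left)
  have hfI_class : ∀ j (x y : (Fin nn → Fin q)), y ∈ typeClass q nn x → fI j y = fI j x := by
    intro j x y hy
    simp only [hfIdef, typeClass_eq_of_mem hy]
  set B : Fin Mi → Finset (Fin nn → Fin q) := fun j =>
    Finset.univ.filter (fun x => (1:ℝ)/2 ≤ fI j x) with hBdef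
  have hMD : ∀ j, lamMD q nn Q D j = ∑ x, Q j x * (1 - fI j x) := by
    intro j
    unfold lamMD
    apply Finset.sum_congr rfl
    intro x _
    congr 1
    have hsplit : ((typeClass q nn x \ D j).card : ℝ)
        = ((typeClass q nn x).card : ℝ) - ((typeClass q nn x ∩ D j).card : ℝ) := by
      have := Finset.card_sdiff_add_card_inter (typeClass q nn x) (D j)
      push_cast [← this]
      ring
    rw [hsplit, sub_div, div_self (ne_of_gt (hTpos x)), hfIdef]
  have hB1 : ∀ j, 1 - lam ≤ ∑ x ∈ B j, Q j x := by
    intro j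
    have hQ1 : ∑ x, Q j x = 1 := (hQ j).2
    have hsd : ∑ x ∈ Finset.univ \ B j, Q j x = 1 - ∑ x ∈ B j, Q j x := by
      rw [Finset.sum_sdiff_eq_sub (Finset.filter_subset _ _), hQ1]
    have hb : ∑ x ∈ Finset.univ \ B j, Q j x ≤ 2 * lamMD q nn Q D j := by
      calc ∑ x ∈ Finset.univ \ B j, Q j x
          ≤ ∑ x ∈ Finset.univ \ B j, Q j x * (2 * (1 - fI j x)) := by
            apply Finset.sum_le_sum
            intro x hx
            rw [Finset.mem_sdiff, hBdef, Finset.mem_filter] at hx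
            have hlt : fI j x < 1/2 := by
              by_contra hcon
              exact hx.2 ⟨Finset.mem_univ _, not_lt.mp hcon⟩
            exact le_mul_of_one_le_right ((hQ j).1 x) (by linarith)
        _ ≤ ∑ x, Q j x * (2 * (1 - fI j x)) := by
            apply Finset.sum_le_sum_of_subset_of_nonneg (Finset.sdiff_subset)
            intro x _ _
            have := hfI1 j x
            have := (hQ j).1 x
            nlinarith
        _ = 2 * lamMD q nn Q D j := by
            rw [hMD j, Finset.mul_sum]
            exact Finset.sum_congr rfl fun x _ => by ring
    have := hmd j
    have h' : ∑ x ∈ Finset.univ \ B j, Q j x < lam := by rw [hlamdef]; linarith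
    rw [hsd] at h'
    linarith
  have hB2 : ∀ j k, j ≠ k → ∑ x ∈ B k, Q j x ≤ lam := by
    intro j k hjk
    have hfa' := hfa j k hjk
    have hb : ∑ x ∈ B k, Q j x ≤ 2 * lamFA q nn Q D j k := by
      calc ∑ x ∈ B k, Q j x
          ≤ ∑ x ∈ B k, Q j x * (2 * fI k x) := by
            apply Finset.sum_le_sum
            intro x hx
            rw [hBdef, Finset.mem_filter] at hx
            exact le_mul_of_one_le_right ((hQ j).1 x) (by linarith [hx.2])
        _ ≤ ∑ x, Q j x * (2 * fI k x) := by
            apply Finset.sum_le_sum_of_subset_of_nonneg (Finset.filter_subset _ _)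
            intro x _ _
            have := hfI0 k x
            have := (hQ j).1 x
            positivity
        _ = 2 * lamFA q nn Q D j k := by
            unfold lamFA
            rw [Finset.mul_sum]
            exact Finset.sum_congr rfl fun x _ => by rw [hfIdef]; ring
    rw [hlamdef]; linarith
  set 𝒯 : Finset (Finset (Fin nn → Fin q)) :=
    (Finset.univ : Finset (Fin nn → Fin q)).image (typeClass q nn) with h𝒯def
  have hclassrep : ∀ C ∈ 𝒯, ∀ z ∈ C, C = typeClass q nn z := by
    intro C hC z hz
    rw [h𝒯def, Finset.mem_image] at hC
    obtain ⟨x, _, rfl⟩ := hC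
    exact (typeClass_eq_of_mem hz).symm
  set G : Fin Mi → Finset (Finset (Fin nn → Fin q)) := fun j => 𝒯.filter (fun C => C ⊆ B j) with hGdef
  set w : Fin Mi → Finset (Fin nn → Fin q) → ℝ := fun j C => ∑ x ∈ C, Q j x with hwdef
  have hdisj : ∀ j, ((G j : Set (Finset (Fin nn → Fin q)))).PairwiseDisjoint id := by
    intro j C hC C' hC' hne
    simp only [hGdef, Finset.coe_filter, Set.mem_setOf_eq] at hC hC'
    simp only [Function.onFun, id_eq]
    rw [Finset.disjoint_left]
    intro z hz hz'
    exact hne ((hclassrep C hC.1 z hz).trans (hclassrep C' hC'.1 z hz').symm)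
  have hbiun : ∀ j, (G j).biUnion id = B j := by
    intro j
    ext x
    rw [Finset.mem_biUnion]
    constructor
    · rintro ⟨C, hC, hx⟩
      rw [hGdef, Finset.mem_filter] at hC
      exact hC.2 hx
    · intro hx
      refine ⟨typeClass q nn x, ?_, mem_typeClass_self x⟩
      rw [hGdef, Finset.mem_filter]
      refine ⟨Finset.mem_image_of_mem _ (Finset.mem_univ x), ?_⟩
      intro y hy
      rw [hBdef, Finset.mem_filter] at hx ⊢
      exact ⟨Finset.mem_univ _, by rw [hfI_class j x y hy]; exact hx.2⟩
  have hsum : ∀ j k, ∑ C ∈ G k, w j C = ∑ x ∈ B k, Q j x := by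
    intro j k
    rw [← hbiun k, Finset.sum_biUnion (hdisj k)]
    rfl
  set N := 𝒯.card with hNdef
  set s : ℕ := ⌊2 * lam * (N:ℝ)⌋₊ + 1 with hsdef
  have hs : 2 * lam * (N:ℝ) < (s:ℕ) := by
    rw [hsdef]
    push_cast
    exact Nat.lt_floor_add_one _
  have hcount := core_count 𝒯 w G lam hlampos hlam6
    (fun j C => Finset.sum_nonneg fun x _ => (hQ j).1 x)
    (fun j => Finset.filter_subset _ _)
    (fun j => (hB1 j).trans_eq (hsum j j).symm)
    (fun j k hjk => (hsum j k) ▸ hB2 j k hjk)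
    s hs
  rw [Fintype.card_fin] at hcount
  exact hcount.trans (sum_choose_le N s)

/-- The numeric endgame: the counting bound beats `2^(R n^(q-1))` for good `n`. -/
lemma numericBound (q : ℕ) (hq : 2 ≤ q) (μ R : ℝ) (hμ : 0 < μ) (hR : 0 < R)
    (nn N : ℕ) (hm2 : 2 ≤ nn)
    (hNle : N ≤ (nn+1)^(q-1))
    (hg : ((2:ℝ)^(q+1)+1) * q * ((1+Real.logb 2 nn) * (nn:ℝ)^(-(min μ 1))) < R) :
    ((N:ℝ)+1) ^ (⌊2 * (2*(nn:ℝ)^(-μ)) * (N:ℝ)⌋₊ + 1) < (2:ℝ) ^ (R * (nn:ℝ)^(q-1)) := by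
  have hn1R : (1:ℝ) ≤ (nn:ℝ) := by exact_mod_cast Nat.one_le_of_lt hm2
  have hnposR : (0:ℝ) < (nn:ℝ) := by linarith
  set lam : ℝ := 2 * (nn:ℝ)^(-μ) with hlamdef
  have hlampos : 0 < lam := by
    have : (0:ℝ) < (nn:ℝ)^(-μ) := Real.rpow_pos_of_pos hnposR _
    rw [hlamdef]; linarith
  set s : ℕ := ⌊2 * lam * (N:ℝ)⌋₊ + 1 with hsdef
  set P : ℝ := (nn:ℝ)^(q-1) with hPdef
  have hPpos : 0 < P := by positivity
  set u : ℝ := (nn:ℝ)^(-(min μ 1)) with hudef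
  have hupos : 0 < u := Real.rpow_pos_of_pos hnposR _
  have hu : (nn:ℝ)^(-μ) ≤ u := by
    apply Real.rpow_le_rpow_of_exponent_le hn1R
    simp only [neg_le_neg_iff]
    exact min_le_left _ _
  have huP : 1 ≤ u * P := by
    have hP' : P = (nn:ℝ)^((q-1:ℕ):ℝ) := (Real.rpow_natCast _ _).symm
    rw [hudef, hP', ← Real.rpow_add hnposR]
    calc (1:ℝ) = (nn:ℝ)^(0:ℝ) := (Real.rpow_zero _).symm
      _ ≤ _ := by
          apply Real.rpow_le_rpow_of_exponent_le hn1R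
          have h1 : (1:ℝ) ≤ ((q-1:ℕ):ℝ) := by
            exact_mod_cast Nat.one_le_iff_ne_zero.mpr (by omega)
          have h2 : min μ 1 ≤ 1 := min_le_right _ _
          linarith
  have hNreal : (N:ℝ) ≤ 2^(q-1) * P := by
    have h1 : (N:ℝ) ≤ ((nn:ℝ)+1)^(q-1) := by exact_mod_cast hNle
    have h2 : ((nn:ℝ)+1)^(q-1) ≤ (2*(nn:ℝ))^(q-1) :=
      pow_le_pow_left₀ (by linarith) (by linarith) _
    calc (N:ℝ) ≤ (2*(nn:ℝ))^(q-1) := h1.trans h2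
      _ = 2^(q-1) * P := by rw [mul_pow, hPdef]
  have hlognn : 0 ≤ Real.logb 2 (nn:ℝ) := Real.logb_nonneg one_lt_two hn1R
  have hN0 : (0:ℝ) ≤ (N:ℝ) := Nat.cast_nonneg N
  have hlogN0 : 0 ≤ Real.logb 2 ((N:ℝ)+1) := Real.logb_nonneg one_lt_two (by linarith)
  have hlogb : Real.logb 2 ((N:ℝ)+1) ≤ q * (1 + Real.logb 2 (nn:ℝ)) := by
    have hnat : N + 1 ≤ (2*nn)^q := by
      have hb' : (nn+1)^(q-1) ≤ (2*nn)^(q-1) := Nat.pow_le_pow_left (by omega) _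
      have hc : (2*nn)^q = (2*nn)^(q-1) * (2*nn) := by
        rw [← pow_succ]; congr 1; omega
      have hd : 1 ≤ (2*nn)^(q-1) := Nat.one_le_pow _ _ (by omega)
      calc N + 1 ≤ (2*nn)^(q-1) + (2*nn)^(q-1) := by omega
        _ ≤ (2*nn)^(q-1) * (2*nn) := by nlinarith
        _ = (2*nn)^q := hc.symm
    have hcast : ((N:ℝ)+1) ≤ (2*(nn:ℝ))^q := by exact_mod_cast hnat
    calc Real.logb 2 ((N:ℝ)+1)
        ≤ Real.logb 2 ((2*(nn:ℝ))^q) :=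
          Real.logb_le_logb_of_le one_lt_two (by linarith) hcast
      _ = q * Real.logb 2 (2*(nn:ℝ)) := Real.logb_pow 2 _ q
      _ = q * (1 + Real.logb 2 (nn:ℝ)) := by
          rw [Real.logb_mul (by norm_num) (by positivity),
            Real.logb_self_eq_one one_lt_two]
  have hsle : (s:ℝ) ≤ 2 * lam * (N:ℝ) + 1 := by
    rw [hsdef]
    push_cast
    have := Nat.floor_le (by positivity : (0:ℝ) ≤ 2 * lam * (N:ℝ))
    linarith
  have step1 : (s:ℝ) * Real.logb 2 ((N:ℝ)+1)
      ≤ (2*lam*(N:ℝ)+1) * ((q:ℝ) * (1 + Real.logb 2 (nn:ℝ))) :=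
    mul_le_mul hsle hlogb hlogN0 (by positivity)
  have step2 : 2*lam*(N:ℝ) ≤ 2^(q+1) * (u*P) := by
    have hlamu : lam ≤ 2*u := by rw [hlamdef]; linarith
    have hmul : 2*lam*(N:ℝ) ≤ 2*(2*u)*(2^(q-1)*P) := by
      apply mul_le_mul (by linarith) hNreal hN0 (by positivity)
    have hpow2 : (2:ℝ)^(q+1) = (2:ℝ)^(q-1) * 2^2 := by
      rw [← pow_add]; congr 1; omega
    calc 2*lam*(N:ℝ) ≤ 2*(2*u)*(2^(q-1)*P) := hmul
      _ = 2^(q+1) * (u*P) := by rw [hpow2]; ring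
  have step3 : (2*lam*(N:ℝ)+1) ≤ ((2:ℝ)^(q+1)+1)*(u*P) := by
    have he : ((2:ℝ)^(q+1)+1)*(u*P) = 2^(q+1)*(u*P) + u*P := by ring
    rw [he]
    linarith
  have step4 : (s:ℝ) * Real.logb 2 ((N:ℝ)+1)
      ≤ (((2:ℝ)^(q+1)+1) * q * ((1 + Real.logb 2 (nn:ℝ)) * u)) * P := by
    calc (s:ℝ) * Real.logb 2 ((N:ℝ)+1)
        ≤ (2*lam*(N:ℝ)+1) * ((q:ℝ) * (1 + Real.logb 2 (nn:ℝ))) := step1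
      _ ≤ (((2:ℝ)^(q+1)+1)*(u*P)) * ((q:ℝ) * (1 + Real.logb 2 (nn:ℝ))) :=
          mul_le_mul_of_nonneg_right step3 (by positivity)
      _ = (((2:ℝ)^(q+1)+1) * q * ((1 + Real.logb 2 (nn:ℝ)) * u)) * P := by ring
  have hchain : (s:ℝ) * Real.logb 2 ((N:ℝ)+1) < R * P :=
    step4.trans_lt (mul_lt_mul_of_pos_right hg hPpos)
  have hpoweq : ((N:ℝ)+1)^s = (2:ℝ)^((s:ℝ) * Real.logb 2 ((N:ℝ)+1)) := by
    rw [mul_comm, Real.rpow_mul (by norm_num : (0:ℝ) ≤ 2),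
      Real.rpow_logb (by norm_num) (by norm_num) (by linarith), Real.rpow_natCast]
  rw [hpoweq]
  exact Real.rpow_lt_rpow_of_exponent_lt one_lt_two hchain

/-- Soft converse (one-shot): for `μ, R > 0` there is no sequence of `(n_i, M_i)` ID codes
for the `q`-ary uniform permutation channel with `n_i → ∞`, `M_i ≥ 2^(R·n_i^(q-1))`, and
both type-I and type-II error probabilities below `n_i^(-μ)` for all `i`. -/
theorem oneShotSoftConverse (q : ℕ) (hq : 2 ≤ q) (μ R : ℝ) (hμ : 0 < μ) (hR : 0 < R)
    (n : ℕ → ℕ) (hn : Filter.Tendsto n Filter.atTop Filter.atTop)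
    (M : ℕ → ℕ)
    (Q : ∀ i, Fin (M i) → (Fin (n i) → Fin q) → ℝ)
    (D : ∀ i, Fin (M i) → Finset (Fin (n i) → Fin q))
    (hQ : ∀ i j, IsPMF (Q i j))
    (hM : ∀ i, (2 : ℝ) ^ (R * (n i : ℝ) ^ (q - 1)) ≤ (M i : ℝ))
    (h1 : ∀ i j, lamMD q (n i) (Q i) (D i) j < (n i : ℝ) ^ (-μ))
    (h2 : ∀ i j k, j ≠ k → lamFA q (n i) (Q i) (D i) j k < (n i : ℝ) ^ (-μ)) :
    False := by
  classical
  obtain ⟨i, hm2, h12, hg⟩ :=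
    (hn.eventually (eventually_good q μ R hμ hR)).exists
  set nn := n i with hnn
  have hnposR : (0:ℝ) < (nn:ℝ) := by
    have : 0 < nn := by omega
    exact_mod_cast this
  have hlam₀pos : 0 < (nn:ℝ)^(-μ) := Real.rpow_pos_of_pos hnposR _
  set N := ((Finset.univ : Finset (Fin nn → Fin q)).image (typeClass q nn)).card with hN
  have hcnt := perIndexCount q nn (M i) ((nn:ℝ)^(-μ)) (Q i) (D i) (hQ i)
    hlam₀pos h12 (h1 i) (h2 i)
  have hNle : N ≤ (nn+1)^(q-1) := card_types_le hq
  have hnum := numericBound q hq μ R hμ hR nn N hm2 hNle hg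
  have hcast : (M i : ℝ) ≤ ((N:ℝ)+1)^(⌊2 * (2*(nn:ℝ)^(-μ)) * (N:ℝ)⌋₊ + 1) := by
    exact_mod_cast hcnt
  exact absurd hnum (not_lt.mpr ((hM i).trans hcast))
end

section
/- Fix an integer q ≥ 2. For every sequence of positive reals R_i → ∞ and every sequence of (n_i, M_i) ID codes for the q-ary uniform permutation channel with n_i → ∞ and M_i ≥ 2^{R_i · n_i^{q−1}}, the error probabilities satisfy liminf_{i→∞} (λ_{1,i} + λ_{2,i}) ≥ 1. -/
/-!
Whether the decoding set `D_j` accepts depends on the channel input `x` only through the ratio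
`|T_x ∩ D_j| / |T_x|`, a function of the type of `x`. Quantize these acceptance ratios to `N + 1`
levels. If two messages `i ≠ j` had the same quantized ratio on every type, averaging over `Q_i`
would give `λ_{i↛i} + λ_{i→j} ≥ 1 - 1/N`. Hence a code with `λ_1 + λ_2 < 1 - 1/N` gives distinct
messages distinct quantized profiles, and since a type is determined by the counts of `q - 1`
symbols there are at most `(N + 1)^((n + 1)^(q - 1))` profiles. So
`R n^(q-1) ≤ log₂ M ≤ (2n)^(q-1) log₂ (N + 1)`, which bounds `R`; as `R_i → ∞`, eventually
`λ_1 + λ_2 ≥ 1 - 1/N`.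
-/

open Finset

/-- Type-I error `λ_1 = max_i λ_{i↛i}` of an ID code, expressed as a supremum. -/
noncomputable def lamI (q n : ℕ) {M : ℕ} (Q : Fin M → (Fin n → Fin q) → ℝ)
    (D : Fin M → Finset (Fin n → Fin q)) : ℝ :=
  ⨆ i, lamMD q n Q D i

/-- Type-II error `λ_2 = max_{i≠j} λ_{i→j}` of an ID code, expressed as a supremum. -/
noncomputable def lamII (q n : ℕ) {M : ℕ} (Q : Fin M → (Fin n → Fin q) → ℝ)
    (D : Fin M → Finset (Fin n → Fin q)) : ℝ :=
  ⨆ i, ⨆ j, ⨆ (_ : i ≠ j), lamFA q n Q D i j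

open Filter Function

theorem exists_perm_comp_eq_of_card_fiber_eq {ι κ : Type*} [Fintype ι] [DecidableEq κ]
    {x y : ι → κ} (h : ∀ k, #{t | x t = k} = #{t | y t = k}) :
    ∃ σ : Equiv.Perm ι, x ∘ σ = y := by
  have e : ∀ k, {t // y t = k} ≃ {t // x t = k} := fun k =>
    Fintype.equivOfCardEq (by simp only [Fintype.card_subtype, h])
  exact ⟨Equiv.ofFiberEquiv e, funext (Equiv.ofFiberEquiv_map e)⟩

theorem card_le_card_pow_of_injective_of_factorsThrough {ι α β γ : Type*} [Fintype ι]
    [Fintype β] [Nonempty β] [Fintype γ] {F : ι → α → β} (hF : Injective F) {κ : α → γ}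
    (hκ : ∀ i, (F i).FactorsThrough κ) :
    Fintype.card ι ≤ Fintype.card β ^ Fintype.card γ := by
  classical
  let b : β := Classical.arbitrary β
  have hinj : Injective fun i => extend κ (F i) fun _ => b := fun i j hij =>
    hF <| funext fun a => by
      rw [← (hκ i).extend_apply (fun _ => b) a, ← (hκ j).extend_apply (fun _ => b) a]
      exact congrFun hij (κ a)
  simpa only [Fintype.card_fun] using Fintype.card_le_of_injective _ hinj

theorem IsPMF.sum_mul_le {α : Type*} [Fintype α] {Q f : α → ℝ} {c : ℝ} (hQ : IsPMF Q)
    (hf : ∀ a, f a ≤ c) : ∑ a, Q a * f a ≤ c :=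
  calc ∑ a, Q a * f a ≤ ∑ a, Q a * c :=
        sum_le_sum fun a _ => mul_le_mul_of_nonneg_left (hf a) (hQ.1 a)
    _ = c := by rw [← sum_mul, hQ.2, one_mul]

theorem sub_lt_of_floor_mul_eq {N : ℕ} (hN : 0 < N) {r s : ℝ} (hs : 0 ≤ s)
    (h : ⌊r * N⌋₊ = ⌊s * N⌋₊) : r - s < 1 / N := by
  have hr : r * N < ⌊s * N⌋₊ + 1 := h ▸ Nat.lt_floor_add_one _
  have hs : (⌊s * N⌋₊ : ℝ) ≤ s * N := Nat.floor_le (by positivity)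
  rw [lt_div_iff₀ (by exact_mod_cast hN)]
  linarith

theorem le_mul_logb_of_two_rpow_le_pow {R : ℝ} {n d K : ℕ} (hn : 1 ≤ n) (hK : 0 < K)
    (h : (2 : ℝ) ^ (R * (n : ℝ) ^ d) ≤ (K : ℝ) ^ ((n + 1) ^ d)) :
    R ≤ 2 ^ d * Real.logb 2 K := by
  have hlog := Real.logb_le_logb_of_le one_lt_two (Real.rpow_pos_of_pos two_pos _) h
  rw [Real.logb_rpow two_pos (by norm_num), Real.logb_pow] at hlog
  have hn' : (1 : ℝ) ≤ n := by exact_mod_cast hn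
  have hpow : ((n + 1) ^ d : ℕ) ≤ (2 : ℝ) ^ d * (n : ℝ) ^ d := by
    rw [← mul_pow]; push_cast; exact pow_le_pow_left₀ (by positivity) (by linarith) d
  have hK' : 0 ≤ Real.logb 2 K := Real.logb_nonneg one_lt_two (by exact_mod_cast hK)
  refine le_of_mul_le_mul_right ?_ (pow_pos (by linarith : (0 : ℝ) < n) d)
  nlinarith [mul_le_mul_of_nonneg_right hpow hK']

namespace PermutationChannel

variable {q n : ℕ}

/-- Counts of the symbols `0, …, q - 2`; the count of `q - 1` is what they leave of `n`. -/
def typeProfile (x : Fin n → Fin q) : Fin (q - 1) → Fin (n + 1) := fun k =>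
  ⟨#{t | x t = Fin.castLE (Nat.sub_le q 1) k},
    Nat.lt_succ_of_le ((card_le_univ _).trans_eq (Fintype.card_fin n))⟩

theorem card_fiber_eq_of_typeProfile_eq {x y : Fin n → Fin q} (h : typeProfile x = typeProfile y)
    (k : Fin q) : #{t | x t = k} = #{t | y t = k} := by
  have hlt : ∀ k : Fin q, (k : ℕ) < q - 1 → #{t | x t = k} = #{t | y t = k} := fun k hk =>
    congrArg Fin.val (congrFun h ⟨k, hk⟩)
  by_cases hk : (k : ℕ) < q - 1
  · exact hlt k hk
  have hrest : ∑ k' ∈ univ.erase k, #{t | x t = k'} = ∑ k' ∈ univ.erase k, #{t | y t = k'} :=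
    sum_congr rfl fun k' hk' => hlt k' <| by
      have := Fin.val_ne_of_ne (ne_of_mem_erase hk'); omega
  have hx : ∑ k, #{t | x t = k} = n := by simpa using sum_card_fiberwise_eq_card_filter univ univ x
  have hy : ∑ k, #{t | y t = k} = n := by simpa using sum_card_fiberwise_eq_card_filter univ univ y
  rw [← add_sum_erase _ _ (mem_univ k)] at hx hy
  omega

theorem typeClass_eq_of_comp_perm {x y : Fin n → Fin q} {σ : Equiv.Perm (Fin n)} (h : x ∘ σ = y) :
    typeClass q n x = typeClass q n y := by
  ext z
  simp only [typeClass, mem_filter, mem_univ, true_and]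
  constructor
  · rintro ⟨τ, rfl⟩
    exact ⟨τ.trans σ.symm, by funext k; simp [← h]⟩
  · rintro ⟨τ, rfl⟩
    exact ⟨τ.trans σ, by funext k; simp [← h]⟩

theorem typeClass_eq_of_typeProfile_eq {x y : Fin n → Fin q} (h : typeProfile x = typeProfile y) :
    typeClass q n x = typeClass q n y :=
  have ⟨_, hσ⟩ := exists_perm_comp_eq_of_card_fiber_eq (card_fiber_eq_of_typeProfile_eq h)
  typeClass_eq_of_comp_perm hσ

theorem mem_typeClass_self (x : Fin n → Fin q) : x ∈ typeClass q n x := by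
  simp only [typeClass, mem_filter, mem_univ, true_and]
  exact ⟨Equiv.refl _, rfl⟩

noncomputable def acceptRatio (D : Finset (Fin n → Fin q)) (x : Fin n → Fin q) : ℝ :=
  (#(typeClass q n x ∩ D) : ℝ) / #(typeClass q n x)

section acceptRatio

variable (D : Finset (Fin n → Fin q)) (x : Fin n → Fin q)

theorem acceptRatio_nonneg : 0 ≤ acceptRatio D x := by
  unfold acceptRatio; positivity

theorem acceptRatio_le_one : acceptRatio D x ≤ 1 :=
  div_le_one_of_le₀ (by exact_mod_cast card_le_card inter_subset_left) (by positivity)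

theorem card_sdiff_div_card_typeClass :
    (#(typeClass q n x \ D) : ℝ) / #(typeClass q n x) = 1 - acceptRatio D x := by
  have hpos : (0 : ℝ) < #(typeClass q n x) := by
    exact_mod_cast card_pos.mpr ⟨x, mem_typeClass_self x⟩
  have hsplit : (#(typeClass q n x \ D) : ℝ) + #(typeClass q n x ∩ D) = #(typeClass q n x) := by
    exact_mod_cast card_sdiff_add_card_inter _ _
  rw [acceptRatio, eq_sub_iff_add_eq, ← add_div, hsplit, div_self hpos.ne']

end acceptRatio

theorem acceptRatio_congr (D : Finset (Fin n → Fin q)) {x y : Fin n → Fin q}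
    (h : typeProfile x = typeProfile y) : acceptRatio D x = acceptRatio D y := by
  rw [acceptRatio, acceptRatio, typeClass_eq_of_typeProfile_eq h]

noncomputable def quantize (N : ℕ) (r : ℝ) : Fin (N + 1) :=
  ⟨min ⌊r * N⌋₊ N, Nat.lt_succ_of_le (min_le_right _ _)⟩

theorem sub_lt_of_quantize_eq {N : ℕ} (hN : 0 < N) {r s : ℝ} (hr : r ≤ 1) (hs₀ : 0 ≤ s)
    (hs : s ≤ 1) (h : quantize N r = quantize N s) : r - s < 1 / N := by
  have hfloor : ∀ {t : ℝ}, t ≤ 1 → ⌊t * N⌋₊ ≤ N := fun ht =>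
    Nat.floor_le_of_le (mul_le_of_le_one_left (Nat.cast_nonneg N) ht)
  have h' := congrArg Fin.val h
  simp only [quantize, min_eq_left (hfloor hr), min_eq_left (hfloor hs)] at h'
  exact sub_lt_of_floor_mul_eq hN hs₀ h'

section IdCode

variable {M : ℕ} {Q : Fin M → (Fin n → Fin q) → ℝ} (D : Fin M → Finset (Fin n → Fin q))

theorem lamFA_eq_sum_acceptRatio (i j : Fin M) :
    lamFA q n Q D i j = ∑ x, Q i x * acceptRatio (D j) x := rfl

theorem lamMD_eq_sum_one_sub_acceptRatio (i : Fin M) :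
    lamMD q n Q D i = ∑ x, Q i x * (1 - acceptRatio (D i) x) := by
  simp only [lamMD, card_sdiff_div_card_typeClass]

theorem lamMD_add_lamFA {i : Fin M} (hQ : IsPMF (Q i)) (j : Fin M) :
    lamMD q n Q D i + lamFA q n Q D i j =
      1 - ∑ x, Q i x * (acceptRatio (D i) x - acceptRatio (D j) x) := by
  simp only [lamMD_eq_sum_one_sub_acceptRatio, lamFA_eq_sum_acceptRatio, mul_sub, mul_one,
    sum_sub_distrib, hQ.2]
  ring

theorem lamI_le_one (hQ : ∀ i, IsPMF (Q i)) : lamI q n Q D ≤ 1 :=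
  Real.iSup_le (fun i => by
    rw [lamMD_eq_sum_one_sub_acceptRatio]
    exact (hQ i).sum_mul_le fun x => by linarith [acceptRatio_nonneg (D i) x]) zero_le_one

theorem lamII_le_one (hQ : ∀ i, IsPMF (Q i)) : lamII q n Q D ≤ 1 :=
  Real.iSup_le (fun i => Real.iSup_le (fun j => Real.iSup_le (fun _ =>
    (hQ i).sum_mul_le fun x => acceptRatio_le_one (D j) x) zero_le_one) zero_le_one) zero_le_one

variable (Q) in
theorem lamMD_le_lamI (i : Fin M) : lamMD q n Q D i ≤ lamI q n Q D :=
  le_ciSup (Finite.bddAbove_range _) i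

variable (Q) in
theorem lamFA_le_lamII {i j : Fin M} (hij : i ≠ j) : lamFA q n Q D i j ≤ lamII q n Q D :=
  le_ciSup_of_le (Finite.bddAbove_range _) i <| le_ciSup_of_le (Finite.bddAbove_range _) j <|
    le_ciSup (Finite.bddAbove_range fun _ : i ≠ j => lamFA q n Q D i j) hij

theorem card_le_of_lamI_add_lamII_lt (hQ : ∀ i, IsPMF (Q i)) {N : ℕ} (hN : 0 < N)
    (herr : lamI q n Q D + lamII q n Q D < 1 - 1 / N) : M ≤ (N + 1) ^ ((n + 1) ^ (q - 1)) := by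
  let F : Fin M → (Fin n → Fin q) → Fin (N + 1) := fun i x => quantize N (acceptRatio (D i) x)
  have hF : Injective F := by
    intro i j hij
    by_contra hne
    have hclose : ∀ x, acceptRatio (D i) x - acceptRatio (D j) x ≤ 1 / N := fun x =>
      (sub_lt_of_quantize_eq hN (acceptRatio_le_one _ x) (acceptRatio_nonneg _ x)
        (acceptRatio_le_one _ x) (congrFun hij x)).le
    linarith [lamMD_add_lamFA D (hQ i) j, (hQ i).sum_mul_le hclose, lamMD_le_lamI Q D i,
      lamFA_le_lamII Q D hne]
  have hκ : ∀ i, (F i).FactorsThrough typeProfile := fun i x y hxy => by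
    simp only [F, acceptRatio_congr (D i) hxy]
  simpa using card_le_card_pow_of_injective_of_factorsThrough hF hκ

end IdCode

end PermutationChannel

open PermutationChannel in
theorem oneShotStrongConverse_general (q : ℕ)
    (R : ℕ → ℝ)
    (hR : Filter.Tendsto R Filter.atTop Filter.atTop)
    (n : ℕ → ℕ) (hn : Filter.Tendsto n Filter.atTop Filter.atTop)
    (M : ℕ → ℕ)
    (Q : ∀ i, Fin (M i) → (Fin (n i) → Fin q) → ℝ)
    (D : ∀ i, Fin (M i) → Finset (Fin (n i) → Fin q))
    (hQ : ∀ i j, IsPMF (Q i j))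
    (hM : ∀ i, (2 : ℝ) ^ (R i * (n i : ℝ) ^ (q - 1)) ≤ (M i : ℝ)) :
    1 ≤ Filter.liminf
      (fun i => lamI q (n i) (Q i) (D i) + lamII q (n i) (Q i) (D i)) Filter.atTop := by
  have hcobdd : IsCoboundedUnder (· ≥ ·) atTop
      fun i => lamI q (n i) (Q i) (D i) + lamII q (n i) (Q i) (D i) :=
    isCoboundedUnder_ge_of_le atTop (x := 2) fun i => by
      linarith [lamI_le_one (D i) (hQ i), lamII_le_one (D i) (hQ i)]
  refine le_of_forall_sub_le fun ε hε => le_liminf_of_le hcobdd ?_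
  obtain ⟨N, hN⟩ := exists_nat_one_div_lt hε
  filter_upwards [hR.eventually_gt_atTop (2 ^ (q - 1) * Real.logb 2 (N + 2 : ℕ)),
    hn.eventually_ge_atTop 1] with i hRi hni
  by_contra! herr
  have hN' : (1 : ℝ) / (N + 1 : ℕ) < ε := by exact_mod_cast hN
  have hcard := card_le_of_lamI_add_lamII_lt (D i) (hQ i) (Nat.add_one_pos N) (by linarith)
  have hrate := le_mul_logb_of_two_rpow_le_pow hni (Nat.add_one_pos (N + 1))
    ((hM i).trans (by exact_mod_cast hcard))
  linarith

/-- Strong converse (one-shot): for any `R_i → ∞` and any sequence of `(n_i, M_i)` ID codes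
for the `q`-ary uniform permutation channel with `n_i → ∞` and `M_i ≥ 2^(R_i·n_i^(q-1))`,
`liminf_i (λ_{1,i} + λ_{2,i}) ≥ 1`. -/
theorem oneShotStrongConverse (q : ℕ) (hq : 2 ≤ q)
    (R : ℕ → ℝ) (hRpos : ∀ i, 0 < R i)
    (hR : Filter.Tendsto R Filter.atTop Filter.atTop)
    (n : ℕ → ℕ) (hn : Filter.Tendsto n Filter.atTop Filter.atTop)
    (M : ℕ → ℕ)
    (Q : ∀ i, Fin (M i) → (Fin (n i) → Fin q) → ℝ)
    (D : ∀ i, Fin (M i) → Finset (Fin (n i) → Fin q))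
    (hQ : ∀ i j, IsPMF (Q i j))
    (hM : ∀ i, (2 : ℝ) ^ (R i * (n i : ℝ) ^ (q - 1)) ≤ (M i : ℝ)) :
    1 ≤ Filter.liminf
      (fun i => lamI q (n i) (Q i) (D i) + lamII q (n i) (Q i) (D i)) Filter.atTop :=
  oneShotStrongConverse_general q R hR n hn M Q D hQ hM
end

section
/- Fix an integer q ≥ 2 and reals μ > 0 and R > 0. There does not exist a sequence of (n_i, l_i, M_i) ID codes for the q-ary uniform permutation channel with n_i → ∞, l_i/n_i → 0, M_i ≥ 2^{R · n_i^{l_i(q−1)}}, and error probabilities satisfying λ_{1,i} < n_i^{−l_i·μ} and λ_{2,i} < n_i^{−l_i·μ} for all i. -/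
open Finset

/-- Type class of an `l`-tuple of blocks: the product of the blockwise type classes. -/
def typeClassL (q n l : ℕ) (x : Fin l → Fin n → Fin q) : Finset (Fin l → Fin n → Fin q) :=
  Finset.univ.filter fun y => ∀ s, y s ∈ typeClass q n (x s)

/-- False-acceptance probability `λ_{i→j}` of an `(n, l, M)` (multishot) ID code for the
`q`-ary uniform permutation channel. -/
noncomputable def lamFAL (q n l : ℕ) {M : ℕ} (Q : Fin M → (Fin l → Fin n → Fin q) → ℝ)
    (D : Fin M → Finset (Fin l → Fin n → Fin q)) (i j : Fin M) : ℝ :=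
  ∑ x, Q i x * (((typeClassL q n l x ∩ D j).card : ℝ) / ((typeClassL q n l x).card : ℝ))

/-- Missed-detection probability `λ_{i↛i}` of an `(n, l, M)` (multishot) ID code for the
`q`-ary uniform permutation channel. -/
noncomputable def lamMDL (q n l : ℕ) {M : ℕ} (Q : Fin M → (Fin l → Fin n → Fin q) → ℝ)
    (D : Fin M → Finset (Fin l → Fin n → Fin q)) (i : Fin M) : ℝ :=
  ∑ x, Q i x * (((typeClassL q n l x \ D i).card : ℝ) / ((typeClassL q n l x).card : ℝ))

/-! The output of the permutation channel is a uniform element of the fiber of the block types of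
its input, and a block type is determined by the counts of the first `q - 1` symbols. Deciding on
types therefore turns an ID code into one for a noiseless channel with `N = (n + 1)^(l(q-1))`
outputs, at the cost of doubling the errors. On a noiseless channel with errors at most `ε`, every
message has a set of at most `4εN + 1` outputs inside its decoding set that carries mass more
than `ε`, and distinct messages have distinct such sets, so `M ≤ N^(4εN + 1)`. For
`ε = n^(-lμ)` and `l / n → 0` this gives `log M = o(n^(l(q-1)))`, against
`log M ≥ R n^(l(q-1)) log 2`. -/

section TypeVector

variable {α : Type*} [DecidableEq α] {n : ℕ}

def symbolCount (x : Fin n → α) (a : α) : ℕ := #{k | x k = a}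

lemma sum_symbolCount [Fintype α] (x : Fin n → α) : ∑ a, symbolCount x a = n := by
  simpa [symbolCount] using
    (card_eq_sum_card_fiberwise (f := x) (s := univ) (t := univ) fun _ _ => mem_univ _).symm

lemma symbolCount_le (x : Fin n → α) (a : α) : symbolCount x a ≤ n :=
  (card_filter_le _ _).trans_eq (card_fin n)

lemma exists_perm_iff_symbolCount_eq (x y : Fin n → α) :
    (∃ σ : Equiv.Perm (Fin n), y = fun k => x (σ k)) ↔
      ∀ a, symbolCount y a = symbolCount x a := by
  constructor
  · rintro ⟨σ, rfl⟩ a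
    exact card_bijective σ σ.bijective (by simp)
  · intro h
    have e : ∀ a, {k // y k = a} ≃ {k // x k = a} := fun a =>
      Fintype.equivOfCardEq (by simpa [Fintype.card_subtype, symbolCount] using h a)
    exact ⟨Equiv.ofFiberEquiv e, funext fun k => (Equiv.ofFiberEquiv_map e k).symm⟩

variable {p : ℕ}

-- The count of the last symbol is left out: it is `n` minus the others, so a block of length `n`
-- has at most `(n + 1) ^ p` types.
def typeVector (x : Fin n → Fin (p + 1)) : Fin p → Fin (n + 1) :=
  fun d => ⟨symbolCount x d.castSucc, Nat.lt_succ_of_le (symbolCount_le x _)⟩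

lemma typeVector_eq_iff (x y : Fin n → Fin (p + 1)) :
    typeVector y = typeVector x ↔ ∀ a, symbolCount y a = symbolCount x a := by
  refine ⟨fun h a => ?_, fun h => funext fun d => Fin.ext (h _)⟩
  have hcast : ∀ d : Fin p, symbolCount y d.castSucc = symbolCount x d.castSucc :=
    fun d => congrArg Fin.val (congrFun h d)
  induction a using Fin.lastCases with
  | cast d => exact hcast d
  | last =>
    have hy := sum_symbolCount y
    have hx := sum_symbolCount x
    rw [Fin.sum_univ_castSucc, Finset.sum_congr rfl fun d _ => hcast d] at hy
    rw [Fin.sum_univ_castSucc] at hx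
    omega

lemma typeClass_eq_filter_typeVector (x : Fin n → Fin (p + 1)) :
    typeClass (p + 1) n x = ({y | typeVector y = typeVector x} : Finset _) := by
  ext y
  simp [typeClass, exists_perm_iff_symbolCount_eq, typeVector_eq_iff]

def typeVectorL {l : ℕ} (x : Fin l → Fin n → Fin (p + 1)) : Fin l → Fin p → Fin (n + 1) :=
  fun s => typeVector (x s)

lemma typeClassL_eq_filter_typeVectorL {l : ℕ} (x : Fin l → Fin n → Fin (p + 1)) :
    typeClassL (p + 1) n l x = ({y | typeVectorL y = typeVectorL x} : Finset _) := by
  ext y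
  simp only [typeClassL, typeClass_eq_filter_typeVector, mem_filter, mem_univ, true_and]
  exact funext_iff.symm

end TypeVector

section FiberDensity

variable {X T : Type*} [Fintype X] [DecidableEq X] [DecidableEq T] (f : X → T)

noncomputable def fiberDensity (D : Finset X) (t : T) : ℝ :=
  #(({y | f y = t} : Finset X) ∩ D) / #{y | f y = t}

variable {f}

lemma fiberDensity_nonneg (D : Finset X) (t : T) : 0 ≤ fiberDensity f D t := by
  unfold fiberDensity; positivity

lemma fiberDensity_le_one (D : Finset X) (t : T) : fiberDensity f D t ≤ 1 :=
  div_le_one_of_le₀ (by exact_mod_cast card_le_card inter_subset_left) (by positivity)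

lemma one_sub_fiberDensity (D : Finset X) (x : X) :
    1 - fiberDensity f D (f x) = #(({y | f y = f x} : Finset X) \ D) / #{y | f y = f x} := by
  have hpos : (0 : ℝ) < #{y | f y = f x} := by
    exact_mod_cast card_pos.2 ⟨x, by simp⟩
  rw [fiberDensity, eq_div_iff hpos.ne', sub_mul, div_mul_cancel₀ _ hpos.ne', one_mul,
    sub_eq_iff_eq_add, ← Nat.cast_add, card_sdiff_add_card_inter]

end FiberDensity

lemma sum_le_two_mul_sum_mul {ι : Type*} [Fintype ι] {w g : ι → ℝ} (hw : ∀ i, 0 ≤ w i)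
    (hg : ∀ i, 0 ≤ g i) {s : Finset ι} (hs : ∀ i ∈ s, 1 / 2 ≤ g i) :
    ∑ i ∈ s, w i ≤ 2 * ∑ i, w i * g i :=
  calc ∑ i ∈ s, w i ≤ ∑ i ∈ s, 2 * (w i * g i) :=
        sum_le_sum fun i hi => by nlinarith [hw i, hs i hi]
    _ ≤ ∑ i, 2 * (w i * g i) :=
        sum_le_sum_of_subset_of_nonneg (subset_univ s) fun i _ _ =>
          mul_nonneg zero_le_two (mul_nonneg (hw i) (hg i))
    _ = 2 * ∑ i, w i * g i := (mul_sum _ _ _).symm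

lemma Finset.Nonempty.exists_fin_range_eq {T : Type*} {A : Finset T} (hA : A.Nonempty) {c : ℕ}
    (hc : #A ≤ c) : ∃ g : Fin c → T, Set.range g = A := by
  obtain ⟨e⟩ : Nonempty (A ↪ Fin c) :=
    Function.Embedding.nonempty_of_card_le (by simpa using hc)
  have : Nonempty A := hA.to_subtype
  refine ⟨Subtype.val ∘ Function.invFun e, ?_⟩
  rw [Set.range_comp, (Function.invFun_surjective e.injective).range_eq, Set.image_univ,
    Subtype.range_coe]

section IdentificationCount

variable {T : Type*} [Fintype T] [DecidableEq T]

/-- Keep the atoms of mass at least `1 / (4N)`: they carry half of the mass, so either they are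
few, or `⌊4εN⌋ + 1` of them already carry more than `ε`. -/
lemma exists_subset_card_le_lt_sum {P : T → ℝ} {B : Finset T} {ε : ℝ}
    (hε : ε ≤ 1 / 4) (hB : 1 - ε ≤ ∑ t ∈ B, P t) :
    ∃ A ⊆ B, A.Nonempty ∧ #A ≤ ⌊4 * ε * Fintype.card T⌋₊ + 1 ∧
      ε < ∑ t ∈ A, P t := by
  set N := Fintype.card T
  obtain ⟨t₀, -⟩ := nonempty_of_sum_ne_zero (s := B) (f := P) (by linarith)
  have hN : (0 : ℝ) < N := by exact_mod_cast Fintype.card_pos_iff.2 ⟨t₀⟩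
  set S := B.filter fun t => 1 / (4 * N) ≤ P t
  have htail : ∑ t ∈ B \ S, P t ≤ 1 / 4 :=
    calc ∑ t ∈ B \ S, P t ≤ #(B \ S) • (1 / (4 * N)) := by
          refine sum_le_card_nsmul _ _ _ fun t ht => ?_
          simp only [S, mem_sdiff, mem_filter, not_and, not_le] at ht
          exact (ht.2 ht.1).le
      _ ≤ N • (1 / (4 * N)) := by gcongr; exact card_le_univ _
      _ = 1 / 4 := by rw [nsmul_eq_mul]; field_simp
  have hS : 1 / 2 ≤ ∑ t ∈ S, P t := by
    have := sum_sdiff (f := P) (show S ⊆ B from filter_subset _ B)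
    linarith
  by_cases hcard : #S ≤ ⌊4 * ε * N⌋₊ + 1
  · exact ⟨S, filter_subset _ _, nonempty_of_sum_ne_zero (f := P) (by linarith), hcard,
      by linarith⟩
  · obtain ⟨A, hAS, hA⟩ := exists_subset_card_eq (not_le.1 hcard).le
    refine ⟨A, hAS.trans (filter_subset _ _), card_pos.1 (by omega), hA.le, ?_⟩
    have hmass : #A • (1 / (4 * N)) ≤ ∑ t ∈ A, P t :=
      card_nsmul_le_sum _ _ _ fun t ht => (mem_filter.1 (hAS ht)).2
    have hfloor := Nat.lt_floor_add_one (4 * ε * N)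
    rw [hA, nsmul_eq_mul] at hmass
    push_cast at hmass hfloor
    calc ε = (4 * ε * N) * (1 / (4 * N)) := by field_simp
      _ < _ := by gcongr
      _ ≤ _ := hmass

theorem card_le_pow_of_identification {M : ℕ} {P : Fin M → T → ℝ} {B : Fin M → Finset T}
    {ε : ℝ} (hε : ε ≤ 1 / 4) (hP : ∀ j t, 0 ≤ P j t)
    (hPB : ∀ j, 1 - ε ≤ ∑ t ∈ B j, P j t)
    (hPB' : ∀ j k, j ≠ k → ∑ t ∈ B k, P j t ≤ ε) :
    M ≤ Fintype.card T ^ (⌊4 * ε * Fintype.card T⌋₊ + 1) := by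
  choose A hAB hA hAcard hAmass using fun j => exists_subset_card_le_lt_sum hε (hPB j)
  choose g hg using fun j => (hA j).exists_fin_range_eq (hAcard j)
  have hinj : Function.Injective g := by
    intro j k hjk
    by_contra hne
    have hAjk : A j = A k := by exact_mod_cast (hg j).symm.trans (hjk ▸ hg k)
    have : ∑ t ∈ A j, P j t ≤ ∑ t ∈ B k, P j t :=
      sum_le_sum_of_subset_of_nonneg (hAjk ▸ hAB k) fun t _ _ => hP j t
    linarith [hAmass j, hPB' j k hne]
  simpa using Fintype.card_le_of_injective g hinj

end IdentificationCount

section Reduction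

variable {X T : Type*} [Fintype X] [DecidableEq X] [Fintype T] [DecidableEq T] {f : X → T}

theorem card_le_pow_of_fiberDensity {M : ℕ} {Q : Fin M → X → ℝ} {D : Fin M → Finset X}
    (hQ : ∀ j, IsPMF (Q j)) {ε : ℝ} (hε : ε ≤ 1 / 8)
    (hMD : ∀ j, ∑ x, Q j x * (1 - fiberDensity f (D j) (f x)) ≤ ε)
    (hFA : ∀ j k, j ≠ k → ∑ x, Q j x * fiberDensity f (D k) (f x) ≤ ε) :
    M ≤ Fintype.card T ^ (⌊8 * ε * Fintype.card T⌋₊ + 1) := by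
  set P : Fin M → T → ℝ := fun j t => ∑ x with f x = t, Q j x
  set B : Fin M → Finset T := fun j => {t | 1 / 2 ≤ fiberDensity f (D j) t}
  have hP_sum (j : Fin M) (s : Finset T) : ∑ t ∈ s, P j t = ∑ x with f x ∈ s, Q j x :=
    sum_fiberwise_eq_sum_filter _ _ _ _
  have hPB (j : Fin M) : 1 - 2 * ε ≤ ∑ t ∈ B j, P j t := by
    have hout : ∑ t ∈ (B j)ᶜ, P j t ≤ 2 * ε := by
      rw [hP_sum]
      refine (sum_le_two_mul_sum_mul (hQ j).1 (fun x => sub_nonneg.2 (fiberDensity_le_one _ _))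
        fun x hx => ?_).trans (by linarith [hMD j])
      simp only [B, mem_filter, mem_compl, mem_univ, true_and, not_le] at hx
      linarith
    have htotal : ∑ t, P j t = 1 := by rw [hP_sum]; simpa using (hQ j).2
    rw [← sum_add_sum_compl (B j)] at htotal
    linarith
  have hPB' (j k : Fin M) (hjk : j ≠ k) : ∑ t ∈ B k, P j t ≤ 2 * ε := by
    rw [hP_sum]
    refine (sum_le_two_mul_sum_mul (hQ j).1 (fun x => fiberDensity_nonneg _ _)
      fun x hx => ?_).trans (by linarith [hFA j k hjk])
    simpa [B] using hx
  have := card_le_pow_of_identification (by linarith) (fun j t => sum_nonneg fun x _ => (hQ j).1 x)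
    hPB hPB'
  rwa [← mul_assoc, show (4 : ℝ) * 2 = 8 by norm_num] at this

end Reduction

section PermutationChannel

variable {p n l M : ℕ} (Q : Fin M → (Fin l → Fin n → Fin (p + 1)) → ℝ)
  (D : Fin M → Finset (Fin l → Fin n → Fin (p + 1)))

lemma lamFAL_eq_sum_fiberDensity (j k : Fin M) :
    lamFAL (p + 1) n l Q D j k = ∑ x, Q j x * fiberDensity typeVectorL (D k) (typeVectorL x) := by
  simp only [lamFAL, typeClassL_eq_filter_typeVectorL, fiberDensity]

lemma lamMDL_eq_sum_one_sub_fiberDensity (j : Fin M) :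
    lamMDL (p + 1) n l Q D j =
      ∑ x, Q j x * (1 - fiberDensity typeVectorL (D j) (typeVectorL x)) := by
  simp only [lamMDL, typeClassL_eq_filter_typeVectorL, one_sub_fiberDensity]

theorem card_le_of_lamMDL_le_of_lamFAL_le (hQ : ∀ j, IsPMF (Q j)) {ε : ℝ} (hε : ε ≤ 1 / 8)
    (hMD : ∀ j, lamMDL (p + 1) n l Q D j ≤ ε)
    (hFA : ∀ j k, j ≠ k → lamFAL (p + 1) n l Q D j k ≤ ε) :
    (M : ℝ) ≤
      (((n : ℝ) + 1) ^ (l * p)) ^ (⌊8 * ε * ((n : ℝ) + 1) ^ (l * p)⌋₊ + 1) := by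
  have hcard : Fintype.card (Fin l → Fin p → Fin (n + 1)) = (n + 1) ^ (l * p) := by
    simp [← pow_mul, mul_comm]
  have := card_le_pow_of_fiberDensity hQ hε
    (fun j => (lamMDL_eq_sum_one_sub_fiberDensity Q D j).symm.le.trans (hMD j))
    fun j k hjk => (lamFAL_eq_sum_fiberDensity Q D j k).symm.le.trans (hFA j k hjk)
  rw [hcard] at this
  exact_mod_cast this

end PermutationChannel

open Filter Topology Real

section Asymptotics

lemma natCast_mul_le_pow {x : ℝ} (hx : 2 ≤ x) (m : ℕ) : m * x ≤ x ^ m := by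
  rcases m with _ | m
  · simp
  · have h2 : ((m + 1 : ℕ) : ℝ) ≤ 2 ^ m := by exact_mod_cast Nat.lt_two_pow_self
    rw [pow_succ]
    exact mul_le_mul_of_nonneg_right (h2.trans (pow_le_pow_left₀ zero_le_two hx m))
      (by linarith)

lemma natCast_mul_rpow_neg_mul_le {x μ : ℝ} (hx : 0 < x) (hxμ : 2 ≤ x ^ μ) (l : ℕ) :
    l * x ^ (-(l * μ)) ≤ x ^ (-μ) := by
  have hy : 0 < x ^ μ := by linarith
  rw [rpow_neg hx.le, rpow_neg hx.le, mul_comm (l : ℝ) μ, rpow_mul_natCast hx.le,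
    ← div_eq_mul_inv, div_le_iff₀ (pow_pos hy l), inv_mul_eq_div, le_div_iff₀ hy]
  exact natCast_mul_le_pow hxμ l

lemma add_one_pow_le_three_mul_pow {x : ℝ} (hx : 0 < x) {m : ℕ} (hm : m ≤ x) :
    (x + 1) ^ m ≤ 3 * x ^ m := by
  have hexp : (1 + 1 / x) ^ m ≤ exp 1 :=
    calc (1 + 1 / x) ^ m ≤ exp (1 / x) ^ m := by
          gcongr
          linarith [add_one_le_exp (1 / x)]
      _ = exp (m / x) := by rw [← exp_nat_mul, mul_one_div]
      _ ≤ exp 1 := exp_le_exp.2 ((div_le_one hx).2 hm)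
  calc (x + 1) ^ m = x ^ m * (1 + 1 / x) ^ m := by rw [← mul_pow]; field_simp
    _ ≤ x ^ m * 3 := by gcongr; linarith [exp_one_lt_d9]
    _ = 3 * x ^ m := mul_comm _ _

lemma tendsto_log_add_one_mul_rpow_neg {μ : ℝ} (hμ : 0 < μ) :
    Tendsto (fun x => log (x + 1) * x ^ (-μ)) atTop (𝓝 0) := by
  have hlog : Tendsto (fun x => log x * x ^ (-μ)) atTop (𝓝 0) :=
    (isLittleO_log_rpow_atTop hμ).tendsto_div_nhds_zero.congr' <| by
      filter_upwards [eventually_gt_atTop 0] with x hx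
      rw [rpow_neg hx.le, div_eq_mul_inv]
  refine tendsto_of_tendsto_of_tendsto_of_le_of_le' tendsto_const_nhds
    (by simpa using hlog.const_mul 2) ?_ ?_
  · filter_upwards [eventually_ge_atTop 1] with x hx
    exact mul_nonneg (log_nonneg (by linarith)) (by positivity)
  · filter_upwards [eventually_ge_atTop 2] with x hx
    have hlog2 : log (x + 1) ≤ 2 * log x :=
      calc log (x + 1) ≤ log (x ^ 2) := log_le_log (by linarith) (by nlinarith)
        _ = 2 * log x := by simp [log_pow]
    have := mul_le_mul_of_nonneg_right hlog2 (rpow_nonneg (by linarith : (0 : ℝ) ≤ x) (-μ))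
    linarith

lemma pow_floor_lt_two_rpow {x μ R : ℝ} {l p : ℕ} (hx : 2 ≤ x) (hxμ : 2 ≤ x ^ μ)
    (hlp : (l * p : ℝ) ≤ x)
    (hsmall : 24 * p * (log (x + 1) * x ^ (-μ)) + log (x + 1) * x ^ (-1 : ℝ) < R * log 2) :
    ((x + 1) ^ (l * p)) ^ (⌊8 * x ^ (-(l * μ)) * (x + 1) ^ (l * p)⌋₊ + 1) <
      (2 : ℝ) ^ (R * x ^ (l * p)) := by
  set m := l * p
  set ε := x ^ (-(l * μ))
  set L := log (x + 1)
  have hx0 : 0 < x := by linarith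
  have hL : 0 ≤ L := log_nonneg (by linarith)
  have hm : (m : ℝ) = l * p := by push_cast [m]; ring
  have hc : ((⌊8 * ε * (x + 1) ^ m⌋₊ + 1 : ℕ) : ℝ) ≤ 8 * ε * (x + 1) ^ m + 1 := by
    push_cast
    linarith [Nat.floor_le (by positivity : 0 ≤ 8 * ε * (x + 1) ^ m)]
  have hlarge : 8 * ε * (x + 1) ^ m * (m * L) ≤ x ^ m * (24 * p * (L * x ^ (-μ))) :=
    calc 8 * ε * (x + 1) ^ m * (m * L)
        ≤ 8 * ε * (3 * x ^ m) * (m * L) := by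
          gcongr
          exact add_one_pow_le_three_mul_pow hx0 (hm ▸ hlp)
      _ = 24 * p * L * x ^ m * (l * ε) := by rw [hm]; ring
      _ ≤ 24 * p * L * x ^ m * x ^ (-μ) := by
          gcongr
          exact natCast_mul_rpow_neg_mul_le hx0 hxμ l
      _ = _ := by ring
  have hsmallm : m * L ≤ x ^ m * (L * x ^ (-1 : ℝ)) := by
    have : (m : ℝ) ≤ x ^ m * x ^ (-1 : ℝ) := by
      rw [rpow_neg_one, ← div_eq_mul_inv, le_div_iff₀ hx0]
      exact natCast_mul_le_pow hx m
    calc m * L ≤ x ^ m * x ^ (-1 : ℝ) * L := by gcongr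
      _ = _ := by ring
  rw [← log_lt_log_iff (by positivity) (by positivity), log_pow, log_pow, log_rpow two_pos]
  calc ((⌊8 * ε * (x + 1) ^ m⌋₊ + 1 : ℕ) : ℝ) * (m * L)
      ≤ (8 * ε * (x + 1) ^ m + 1) * (m * L) := by gcongr
    _ ≤ x ^ m * (24 * p * (L * x ^ (-μ)) + L * x ^ (-1 : ℝ)) := by linarith
    _ < x ^ m * (R * log 2) := by gcongr
    _ = R * x ^ m * log 2 := by ring

lemma eventually_two_le_and_eight_le_rpow_and_lt {μ R : ℝ} (hμ : 0 < μ) (hR : 0 < R)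
    (p : ℕ) :
    ∀ᶠ x : ℝ in atTop, 2 ≤ x ∧ 8 ≤ x ^ μ ∧
      24 * p * (log (x + 1) * x ^ (-μ)) + log (x + 1) * x ^ (-1 : ℝ) < R * log 2 := by
  have hlim : Tendsto (fun x => 24 * p * (log (x + 1) * x ^ (-μ)) + log (x + 1) * x ^ (-1 : ℝ))
      atTop (𝓝 0) := by
    simpa using ((tendsto_log_add_one_mul_rpow_neg hμ).const_mul (24 * p : ℝ)).add
      (tendsto_log_add_one_mul_rpow_neg one_pos)
  exact (eventually_ge_atTop 2).and <| ((tendsto_rpow_atTop hμ).eventually_ge_atTop 8).and <|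
    hlim.eventually (gt_mem_nhds (by positivity))

end Asymptotics

/-- Soft converse II (multishot): for `μ, R > 0`, there is no sequence of `(n_i, l_i, M_i)`
ID codes for the `q`-ary uniform permutation channel with `n_i → ∞`, `l_i / n_i → 0`,
`M_i ≥ 2^(R · n_i^(l_i(q-1)))`, and both error probabilities below `n_i^(-l_i·μ)`
for all `i`. -/
theorem multiShotSoftConverseII (q : ℕ) (hq : 2 ≤ q) (μ R : ℝ) (hμ : 0 < μ) (hR : 0 < R)
    (n : ℕ → ℕ) (hn : Filter.Tendsto n Filter.atTop Filter.atTop)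
    (l : ℕ → ℕ) (hlpos : ∀ i, 0 < l i)
    (hl : Filter.Tendsto (fun i => (l i : ℝ) / (n i : ℝ)) Filter.atTop (nhds 0))
    (M : ℕ → ℕ)
    (Q : ∀ i, Fin (M i) → (Fin (l i) → Fin (n i) → Fin q) → ℝ)
    (D : ∀ i, Fin (M i) → Finset (Fin (l i) → Fin (n i) → Fin q))
    (hQ : ∀ i j, IsPMF (Q i j))
    (hM : ∀ i, (2 : ℝ) ^ (R * (n i : ℝ) ^ (l i * (q - 1))) ≤ (M i : ℝ))
    (h1 : ∀ i j, lamMDL q (n i) (l i) (Q i) (D i) j < (n i : ℝ) ^ (-((l i : ℝ) * μ)))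
    (h2 : ∀ i j k, j ≠ k →
      lamFAL q (n i) (l i) (Q i) (D i) j k < (n i : ℝ) ^ (-((l i : ℝ) * μ))) :
    False := by
  obtain ⟨p, rfl⟩ : ∃ p, q = p + 1 := ⟨q - 1, by omega⟩
  have hlp : ∀ᶠ i in atTop, (l i : ℝ) / n i * p < 1 :=
    (hl.mul_const (p : ℝ)).eventually (gt_mem_nhds (by simp))
  obtain ⟨i, ⟨hx, hxμ, hsmall⟩, hlpi⟩ :=
    (((tendsto_natCast_atTop_atTop.comp hn).eventually
      (eventually_two_le_and_eight_le_rpow_and_lt hμ hR p)).and hlp).exists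
  simp only [Function.comp_apply] at hx hxμ hsmall
  rw [div_mul_eq_mul_div, div_lt_one (by linarith)] at hlpi
  have hε : (n i : ℝ) ^ (-(l i * μ)) ≤ 1 / 8 :=
    calc (n i : ℝ) ^ (-(l i * μ)) ≤ l i * (n i : ℝ) ^ (-(l i * μ)) :=
          le_mul_of_one_le_left (by positivity) (by exact_mod_cast hlpos i)
      _ ≤ (n i : ℝ) ^ (-μ) := natCast_mul_rpow_neg_mul_le (by linarith) (by linarith) _
      _ ≤ 1 / 8 := by
          rw [rpow_neg (by linarith)]
          exact inv_le_of_inv_le₀ (by norm_num) (by linarith)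
  have hupper := card_le_of_lamMDL_le_of_lamFAL_le (Q i) (D i) (hQ i) hε (fun j => (h1 i j).le)
    fun j k hjk => (h2 i j k hjk).le
  have hlt := pow_floor_lt_two_rpow hx (by linarith) hlpi.le hsmall
  have hlower := hM i
  rw [add_tsub_cancel_right] at hlower
  linarith
end

section
/- Let α ∈ (0,1) be a real number and let N, M, Γ be positive integers with M > 1 + N/α. Let U_1, …, U_M be M distinct subsets of an N-element set, each of size Γ, and let Δ = max_{i≠j} |U_i ∩ U_j|. Then for every real ε ∈ (0, 1/2] satisfying N·h₂(ε) ≤ log₂ M, one has Δ/Γ ≥ (1−α)·ε; equivalently, Δ/Γ ≥ (1−α)·h₂^{−1}(log₂(M)/N), where h₂^{−1} is the inverse of the binary entropy function on [0, 1/2]. -/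
open Finset

/-- The binary entropy function `h₂(ε) = -ε·log₂ ε - (1-ε)·log₂(1-ε)`. -/
noncomputable def binH (ε : ℝ) : ℝ :=
  -ε * Real.logb 2 ε - (1 - ε) * Real.logb 2 (1 - ε)

lemma binH_eq_binEntropy_div (p : ℝ) : binH p = Real.binEntropy p / Real.log 2 := by
  unfold binH Real.binEntropy Real.logb
  rw [Real.log_inv, Real.log_inv]
  ring

set_option maxHeartbeats 1000000 in
/-- Lower bound on the normalized maximum pairwise intersection of a set system:
if `U_1, …, U_M` are distinct subsets of an `N`-element set, each of size `Γ`, with maximum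
pairwise intersection `Δ`, and `M > 1 + N/α`, then for every `ε ∈ (0, 1/2]` with
`N·h₂(ε) ≤ log₂ M` one has `Δ/Γ ≥ (1-α)·ε`  (i.e. `Δ/Γ ≥ (1-α)·h₂⁻¹(log₂(M)/N)`). -/
theorem setSystemIntersectionBound (α : ℝ) (hα : α ∈ Set.Ioo (0 : ℝ) 1)
    (N M Γ Δ : ℕ) (hN : 1 ≤ N) (hMpos : 1 ≤ M) (hΓ : 1 ≤ Γ)
    (hM : 1 + (N : ℝ) / α < (M : ℝ))
    (U : Fin M → Finset (Fin N)) (hU : Function.Injective U)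
    (hcard : ∀ i, (U i).card = Γ)
    (hΔub : ∀ i j, i ≠ j → (U i ∩ U j).card ≤ Δ)
    (hΔmax : ∃ i j, i ≠ j ∧ (U i ∩ U j).card = Δ)
    (ε : ℝ) (hε : ε ∈ Set.Ioc (0 : ℝ) (1 / 2))
    (hεM : (N : ℝ) * binH ε ≤ Real.logb 2 (M : ℝ)) :
    (1 - α) * ε ≤ (Δ : ℝ) / (Γ : ℝ) := by
  classical
  obtain ⟨hαpos, hα1⟩ := hα
  obtain ⟨hεpos, hεhalf⟩ := hε
  have hNpos : (0:ℝ) < N := by exact_mod_cast hN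
  have hΓpos : (0:ℝ) < Γ := by exact_mod_cast hΓ
  have hM2 : 2 ≤ M := by
    have h1 : (1:ℝ) < (M:ℝ) := by
      have : (0:ℝ) < (N:ℝ)/α := div_pos hNpos hαpos
      linarith
    have : 1 < M := by exact_mod_cast h1
    omega
  have hΓleN : Γ ≤ N := by
    have := hcard ⟨0, by omega⟩
    calc Γ = (U ⟨0, by omega⟩).card := this.symm
      _ ≤ (univ : Finset (Fin N)).card := Finset.card_le_card (Finset.subset_univ _)
      _ = N := by simp
  have hΓltN : Γ < N := by
    rcases lt_or_eq_of_le hΓleN with h | h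
    · exact h
    · exfalso
      have huniv : ∀ i, U i = univ := by
        intro i
        apply Finset.eq_univ_of_card
        rw [hcard i, h]; simp
      have : (⟨0, by omega⟩ : Fin M) = ⟨1, by omega⟩ := hU ((huniv _).trans (huniv _).symm)
      simp at this
  -- M ≤ choose N Γ
  have hMchoose : M ≤ N.choose Γ := by
    have hinj : Function.Injective (fun i : Fin M =>
        (⟨U i, by simp [Finset.mem_powersetCard, Finset.subset_univ, hcard]⟩ :
          (Finset.powersetCard Γ (univ : Finset (Fin N))))) := by
      intro i j hij
      exact hU (congrArg Subtype.val hij)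
    have := Fintype.card_le_of_injective _ hinj
    simpa [Finset.card_powersetCard] using this
  -- entropy bound: ε ≤ Γ/N
  set x : ℝ := (Γ:ℝ)/(N:ℝ) with hxdef
  have hxpos : 0 < x := div_pos hΓpos hNpos
  have hx1 : x < 1 := by
    rw [hxdef, div_lt_one hNpos]; exact_mod_cast hΓltN
  have hchoose_real : (N.choose Γ : ℝ) * (x^Γ * (1-x)^(N-Γ)) ≤ 1 := by
    have hbin := add_pow x (1-x) N
    have h1 : ((x + (1-x)):ℝ)^N = 1 := by norm_num
    have hmem : Γ ∈ Finset.range (N+1) := Finset.mem_range.mpr (by omega)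
    have h1x : (0:ℝ) ≤ 1 - x := by linarith
    have hterm := Finset.single_le_sum
      (f := fun k => x ^ k * (1-x) ^ (N - k) * (N.choose k : ℝ))
      (fun k _ => by positivity) hmem
    rw [← hbin, h1] at hterm
    calc (N.choose Γ : ℝ) * (x^Γ * (1-x)^(N-Γ))
        = x ^ Γ * (1-x) ^ (N - Γ) * (N.choose Γ : ℝ) := by ring
      _ ≤ 1 := hterm
  have hxΓpos : (0:ℝ) < x^Γ := by positivity
  have hx1pos : (0:ℝ) < (1-x)^(N-Γ) := by
    have : (0:ℝ) < 1 - x := by linarith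
    positivity
  have hchoosepos : (0:ℝ) < (N.choose Γ : ℝ) := by
    exact_mod_cast Nat.choose_pos hΓleN
  have hlogchoose : Real.logb 2 (N.choose Γ : ℝ) ≤ (N:ℝ) * binH x := by
    have hp : (0:ℝ) < x^Γ * (1-x)^(N-Γ) := mul_pos hxΓpos hx1pos
    have hle : (N.choose Γ : ℝ) ≤ (x^Γ)⁻¹ * ((1-x)^(N-Γ))⁻¹ := by
      rw [← mul_inv, ← one_div]
      exact (le_div_iff₀ hp).mpr (by linarith [hchoose_real])
    have hmono := Real.logb_le_logb_of_le (b := 2) one_lt_two hchoosepos hle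
    have hexp : Real.logb 2 ((x^Γ)⁻¹ * ((1-x)^(N-Γ))⁻¹) =
        -((Γ:ℝ) * Real.logb 2 x) - ((N-Γ:ℕ):ℝ) * Real.logb 2 (1-x) := by
      rw [Real.logb_mul (by positivity) (by positivity), Real.logb_inv, Real.logb_inv,
        Real.logb_pow, Real.logb_pow]
      ring
    have hNx : (N:ℝ) * x = (Γ:ℝ) := by
      rw [hxdef]; field_simp
    have hN1x : (N:ℝ) * (1-x) = ((N-Γ:ℕ):ℝ) := by
      rw [Nat.cast_sub hΓleN, hxdef]; field_simp
    have hbinHx : (N:ℝ) * binH x =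
        -((N:ℝ)*x) * Real.logb 2 x - ((N:ℝ)*(1-x)) * Real.logb 2 (1-x) := by
      unfold binH; ring
    rw [hbinHx, hNx, hN1x]
    calc Real.logb 2 (N.choose Γ : ℝ) ≤ _ := hmono
      _ = _ := by rw [hexp]; ring
  have hMlog : Real.logb 2 (M:ℝ) ≤ (N:ℝ) * binH x := by
    refine le_trans ?_ hlogchoose
    exact Real.logb_le_logb_of_le one_lt_two (by exact_mod_cast hMpos) (by exact_mod_cast hMchoose)
  have hbinHle : binH ε ≤ binH x :=
    le_of_mul_le_mul_left (le_trans hεM hMlog) hNpos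
  have hεx : ε ≤ x := by
    by_contra hcon
    push_neg at hcon
    have hxm : x ∈ Set.Icc (0:ℝ) 2⁻¹ := ⟨le_of_lt hxpos, by norm_num at hεhalf ⊢; linarith⟩
    have hεm : ε ∈ Set.Icc (0:ℝ) 2⁻¹ := ⟨le_of_lt hεpos, by norm_num at hεhalf ⊢; linarith⟩
    have hsm := Real.binEntropy_strictMonoOn hxm hεm hcon
    have hl2 : 0 < Real.log 2 := Real.log_pos one_lt_two
    have hmul : Real.binEntropy ε ≤ Real.binEntropy x := by
      have h := mul_le_mul_of_nonneg_right hbinHle hl2.le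
      rw [binH_eq_binEntropy_div, binH_eq_binEntropy_div,
        div_mul_cancel₀ _ (ne_of_gt hl2), div_mul_cancel₀ _ (ne_of_gt hl2)] at h
      exact h
    linarith
  have hεN : ε * (N:ℝ) ≤ (Γ:ℝ) := by
    rw [hxdef] at hεx
    calc ε * (N:ℝ) ≤ ((Γ:ℝ)/(N:ℝ)) * (N:ℝ) := by nlinarith
      _ = (Γ:ℝ) := by field_simp
  -- double counting
  set d : Fin N → ℕ := fun t => ∑ i : Fin M, if t ∈ U i then 1 else 0 with hddef
  have h1 : ∑ t : Fin N, d t = M * Γ := by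
    rw [hddef]
    rw [Finset.sum_comm]
    have : ∀ i : Fin M, (∑ t : Fin N, if t ∈ U i then 1 else 0) = Γ := by
      intro i
      rw [← hcard i]
      simp [Finset.sum_ite_mem]
    simp [this, mul_comm]
  have h2 : ∑ i : Fin M, ∑ j : Fin M, (U i ∩ U j).card = ∑ t : Fin N, d t * d t := by
    have hinter : ∀ i j : Fin M, (U i ∩ U j).card =
        ∑ t : Fin N, (if t ∈ U i then 1 else 0) * (if t ∈ U j then 1 else 0) := by
      intro i j
      have : (U i ∩ U j).card = ∑ t : Fin N, if t ∈ U i ∩ U j then 1 else 0 := by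
        rw [Finset.sum_ite_mem, Finset.univ_inter, Finset.card_eq_sum_ones]
      rw [this]
      refine Finset.sum_congr rfl fun t _ => ?_
      by_cases h1 : t ∈ U i <;> by_cases h2 : t ∈ U j <;> simp [h1, h2]
    calc ∑ i : Fin M, ∑ j : Fin M, (U i ∩ U j).card
        = ∑ i : Fin M, ∑ j : Fin M, ∑ t : Fin N,
            (if t ∈ U i then 1 else 0) * (if t ∈ U j then 1 else 0) := by
          simp_rw [hinter]
      _ = ∑ i : Fin M, ∑ t : Fin N, ∑ j : Fin M,
            (if t ∈ U i then 1 else 0) * (if t ∈ U j then 1 else 0) := by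
          exact Finset.sum_congr rfl fun i _ => Finset.sum_comm
      _ = ∑ t : Fin N, ∑ i : Fin M, ∑ j : Fin M,
            (if t ∈ U i then 1 else 0) * (if t ∈ U j then 1 else 0) := Finset.sum_comm
      _ = ∑ t : Fin N, d t * d t := by
          refine Finset.sum_congr rfl fun t _ => ?_
          rw [hddef]
          rw [Finset.sum_mul_sum]
  have h4 : ∑ i : Fin M, ∑ j : Fin M, (U i ∩ U j).card ≤ M * (Γ + (M-1)*Δ) := by
    have per_i : ∀ i : Fin M, ∑ j : Fin M, (U i ∩ U j).card ≤ Γ + (M-1)*Δ := by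
      intro i
      rw [← Finset.add_sum_erase _ _ (Finset.mem_univ i)]
      refine add_le_add (by simp [hcard i]) ?_
      calc ∑ j ∈ Finset.univ.erase i, (U i ∩ U j).card
          ≤ (Finset.univ.erase i).card • Δ := by
            refine Finset.sum_le_card_nsmul _ _ _ fun j hj => ?_
            exact hΔub i j (Ne.symm (Finset.ne_of_mem_erase hj))
        _ = (M-1)*Δ := by
            rw [Finset.card_erase_of_mem (Finset.mem_univ i)]
            simp [smul_eq_mul]
    calc ∑ i : Fin M, ∑ j : Fin M, (U i ∩ U j).card
        ≤ ∑ _i : Fin M, (Γ + (M-1)*Δ) := Finset.sum_le_sum fun i _ => per_i i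
      _ = M * (Γ + (M-1)*Δ) := by simp [mul_comm]
  have hcs : (∑ t : Fin N, (d t : ℝ))^2 ≤ (N:ℝ) * ∑ t : Fin N, (d t : ℝ)^2 := by
    have := sq_sum_le_card_mul_sum_sq (s := (univ : Finset (Fin N))) (f := fun t => (d t : ℝ))
    simpa using this
  have hC : ((M:ℝ)*(Γ:ℝ))^2 ≤ (N:ℝ) * ((M:ℝ)*((Γ:ℝ) + ((M:ℝ)-1)*(Δ:ℝ))) := by
    have e1 : (∑ t : Fin N, (d t : ℝ)) = (M:ℝ)*(Γ:ℝ) := by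
      rw [← Nat.cast_sum]
      rw [h1]; push_cast; ring
    have e2 : (∑ t : Fin N, (d t : ℝ)^2) = ((∑ i : Fin M, ∑ j : Fin M, (U i ∩ U j).card : ℕ) : ℝ) := by
      push_cast
      rw [show ((∑ i : Fin M, ∑ j : Fin M, ((U i ∩ U j).card : ℝ))) =
        ((∑ t : Fin N, (d t : ℝ) * (d t : ℝ))) from by exact_mod_cast congrArg Nat.cast h2]
      exact Finset.sum_congr rfl fun t _ => (sq ((d t : ℝ))).symm ▸ by ring
    have e3 : ((∑ i : Fin M, ∑ j : Fin M, (U i ∩ U j).card : ℕ) : ℝ) ≤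
        (M:ℝ)*((Γ:ℝ) + ((M:ℝ)-1)*(Δ:ℝ)) := by
      have := h4
      have hcast : ((M * (Γ + (M-1)*Δ) : ℕ) : ℝ) = (M:ℝ)*((Γ:ℝ) + ((M:ℝ)-1)*(Δ:ℝ)) := by
        push_cast [Nat.cast_sub hMpos]
        ring
      calc ((∑ i : Fin M, ∑ j : Fin M, (U i ∩ U j).card : ℕ) : ℝ)
          ≤ ((M * (Γ + (M-1)*Δ) : ℕ) : ℝ) := by exact_mod_cast this
        _ = _ := hcast
    calc ((M:ℝ)*(Γ:ℝ))^2 = (∑ t : Fin N, (d t : ℝ))^2 := by rw [e1]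
      _ ≤ (N:ℝ) * ∑ t : Fin N, (d t : ℝ)^2 := hcs
      _ = (N:ℝ) * ((∑ i : Fin M, ∑ j : Fin M, (U i ∩ U j).card : ℕ) : ℝ) := by rw [e2]
      _ ≤ _ := by
          exact mul_le_mul_of_nonneg_left e3 (le_of_lt hNpos)
  -- final algebra
  have hMr2 : (2:ℝ) ≤ (M:ℝ) := by exact_mod_cast hM2
  have hΔnn : (0:ℝ) ≤ (Δ:ℝ) := Nat.cast_nonneg _
  have hαM : α + (N:ℝ) < α * (M:ℝ) := by
    have := mul_lt_mul_of_pos_left hM hαpos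
    have hrw : α * (1 + (N:ℝ)/α) = α + (N:ℝ) := by field_simp
    linarith [hrw ▸ this]
  rw [le_div_iff₀ hΓpos]
  -- step2 : Γ(MΓ − N) ≤ N(M−1)Δ
  have hMrpos : (0:ℝ) < (M:ℝ) := by linarith
  have step2 : (Γ:ℝ) * ((M:ℝ)*(Γ:ℝ) - (N:ℝ)) ≤ (N:ℝ)*((M:ℝ)-1)*(Δ:ℝ) := by
    refine le_of_mul_le_mul_left ?_ hMrpos
    ring_nf
    ring_nf at hC
    linarith [hC]
  have hΓ1 : (1:ℝ) ≤ (Γ:ℝ) := by exact_mod_cast hΓ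
  have key : (1-α)*ε*((N:ℝ)*((M:ℝ)-1)) ≤ (M:ℝ)*(Γ:ℝ) - (N:ℝ) := by
    have c1 : (1-α)*(ε*(N:ℝ))*((M:ℝ)-1) ≤ (1-α)*(Γ:ℝ)*((M:ℝ)-1) :=
      mul_le_mul_of_nonneg_right (mul_le_mul_of_nonneg_left hεN (by linarith)) (by linarith)
    have c2 : (α + (N:ℝ))*(Γ:ℝ) ≤ α*(M:ℝ)*(Γ:ℝ) :=
      mul_le_mul_of_nonneg_right hαM.le hΓpos.le
    nlinarith [c1, c2, mul_nonneg hNpos.le (by linarith : (0:ℝ) ≤ (Γ:ℝ) - 1)]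
  have step3 : (1-α)*ε*(Γ:ℝ)*((N:ℝ)*((M:ℝ)-1)) ≤ (Γ:ℝ) * ((M:ℝ)*(Γ:ℝ) - (N:ℝ)) := by
    have := mul_le_mul_of_nonneg_left key hΓpos.le
    nlinarith [this]
  have hpos : (0:ℝ) < (N:ℝ)*((M:ℝ)-1) := by nlinarith
  have hfin : ((1-α)*ε*(Γ:ℝ)) * ((N:ℝ)*((M:ℝ)-1)) ≤ (Δ:ℝ) * ((N:ℝ)*((M:ℝ)-1)) := by
    nlinarith [step3, step2]
  exact le_of_mul_le_mul_right hfin hpos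
end

section
/- Let α ∈ (0,1) be a real number and let N, M, Γ be positive integers. Let U_1, …, U_M be M distinct subsets of an N-element set, each of size Γ, with maximum pairwise intersection Δ = max_{i≠j} |U_i ∩ U_j|. If M > 1 + N/α, then Δ/N > (1−α)·(Γ/N)², i.e., N·Δ > (1−α)·Γ². -/
open Finset

/-- If `U_1, …, U_M` are distinct subsets of an `N`-element set, each of size `Γ`, with
maximum pairwise intersection `Δ`, and `M > 1 + N/α` for some `α ∈ (0,1)`, then
`Δ/N > (1-α)·(Γ/N)²`, i.e. `N·Δ > (1-α)·Γ²`. -/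
theorem setSystemIntersectionLowerBound (α : ℝ) (hα : α ∈ Set.Ioo (0 : ℝ) 1)
    (N M Γ Δ : ℕ) (hN : 1 ≤ N) (hMpos : 1 ≤ M) (hΓ : 1 ≤ Γ)
    (U : Fin M → Finset (Fin N)) (hU : Function.Injective U)
    (hcard : ∀ i, (U i).card = Γ)
    (hΔub : ∀ i j, i ≠ j → (U i ∩ U j).card ≤ Δ)
    (hΔmax : ∃ i j, i ≠ j ∧ (U i ∩ U j).card = Δ)
    (hM : 1 + (N : ℝ) / α < (M : ℝ)) :
    (1 - α) * (Γ : ℝ) ^ 2 < (N : ℝ) * (Δ : ℝ) := by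
  classical
  obtain ⟨hα0, hα1⟩ := hα
  set d : Fin N → ℕ := fun x => (univ.filter fun i => x ∈ U i).card with hd
  have hdx : ∀ x, d x = ∑ i : Fin M, if x ∈ U i then 1 else 0 := by
    intro x; exact Finset.card_filter _ _
  have hinner : ∀ s : Finset (Fin N), (∑ x : Fin N, if x ∈ s then 1 else 0) = s.card := by
    intro s; simp [Finset.sum_ite_mem]
  have h1 : ∑ x, d x = M * Γ := by
    have : ∑ x, d x = ∑ i : Fin M, ∑ x : Fin N, if x ∈ U i then 1 else 0 := by
      rw [← Finset.sum_comm]; simp [hdx]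
    rw [this]
    simp [hinner, hcard]
  have h2 : ∑ x, d x * d x = ∑ i : Fin M, ∑ j : Fin M, (U i ∩ U j).card := by
    have hx : ∀ x, d x * d x = ∑ i : Fin M, ∑ j : Fin M, if x ∈ U i ∩ U j then 1 else 0 := by
      intro x
      rw [hdx, Finset.sum_mul_sum]
      refine Finset.sum_congr rfl fun i _ => Finset.sum_congr rfl fun j _ => ?_
      by_cases h1 : x ∈ U i <;> by_cases h2 : x ∈ U j <;> simp [h1, h2]
    calc ∑ x, d x * d x
        = ∑ x : Fin N, ∑ i : Fin M, ∑ j : Fin M, if x ∈ U i ∩ U j then 1 else 0 := by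
          simp [hx]
      _ = ∑ i : Fin M, ∑ j : Fin M, ∑ x : Fin N, if x ∈ U i ∩ U j then 1 else 0 := by
          rw [Finset.sum_comm]
          exact Finset.sum_congr rfl fun i _ => Finset.sum_comm
      _ = ∑ i : Fin M, ∑ j : Fin M, (U i ∩ U j).card :=
          Finset.sum_congr rfl fun i _ => Finset.sum_congr rfl fun j _ => hinner _
  have h3 : ∑ x, d x * d x ≤ M * Γ + M * ((M - 1) * Δ) := by
    rw [h2]
    have hbound : ∀ i : Fin M, ∑ j : Fin M, (U i ∩ U j).card ≤ Γ + (M - 1) * Δ := by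
      intro i
      rw [← Finset.add_sum_erase _ _ (Finset.mem_univ i)]
      gcongr
      · simp [hcard]
      · calc ∑ j ∈ univ.erase i, (U i ∩ U j).card
            ≤ ∑ j ∈ univ.erase i, Δ := by
              refine Finset.sum_le_sum fun j hj => ?_
              exact hΔub i j (Ne.symm (Finset.ne_of_mem_erase hj))
          _ = (M - 1) * Δ := by
              simp [Finset.card_erase_of_mem, Finset.card_univ]
    calc ∑ i : Fin M, ∑ j : Fin M, (U i ∩ U j).card
        ≤ ∑ _i : Fin M, (Γ + (M - 1) * Δ) := Finset.sum_le_sum fun i _ => hbound i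
      _ = M * (Γ + (M - 1) * Δ) := by simp [Finset.sum_const, mul_comm]
      _ = M * Γ + M * ((M - 1) * Δ) := by ring
  -- Cauchy-Schwarz
  have hcs : ((M : ℝ) * Γ) ^ 2 ≤ (N : ℝ) * ((M : ℝ) * Γ + (M : ℝ) * (((M : ℝ) - 1) * Δ)) := by
    have := sq_sum_le_card_mul_sum_sq (s := (univ : Finset (Fin N)))
      (f := fun x => (d x : ℝ))
    simp only [Finset.card_univ, Fintype.card_fin] at this
    have hl : (∑ x, (d x : ℝ)) = (M : ℝ) * Γ := by
      have h1' := congrArg (fun n : ℕ => (n : ℝ)) h1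
      push_cast at h1'
      simpa using h1'
    have hM2 : 2 ≤ M := by
      by_contra h
      have hM1 : M = 1 := by omega
      have hMc : (M : ℝ) = 1 := by rw [hM1]; norm_num
      have : (0 : ℝ) < (N : ℝ) / α := by positivity
      rw [hMc] at hM; linarith
    have hr : (∑ x, (d x : ℝ) ^ 2) ≤ (M : ℝ) * Γ + (M : ℝ) * (((M : ℝ) - 1) * Δ) := by
      have : (∑ x, (d x : ℝ) ^ 2) = ((∑ x, d x * d x : ℕ) : ℝ) := by
        push_cast; exact Finset.sum_congr rfl fun x _ => by ring
      rw [this]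
      have := h3
      have hcast : ((M * Γ + M * ((M - 1) * Δ) : ℕ) : ℝ)
          = (M : ℝ) * Γ + (M : ℝ) * (((M : ℝ) - 1) * Δ) := by
        push_cast [Nat.cast_sub hMpos]; ring
      calc ((∑ x, d x * d x : ℕ) : ℝ) ≤ ((M * Γ + M * ((M - 1) * Δ) : ℕ) : ℝ) := by
            exact_mod_cast h3
        _ = _ := hcast
    calc ((M : ℝ) * Γ) ^ 2 = (∑ x, (d x : ℝ)) ^ 2 := by rw [hl]
      _ ≤ (N : ℝ) * ∑ x, (d x : ℝ) ^ 2 := this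
      _ ≤ (N : ℝ) * ((M : ℝ) * Γ + (M : ℝ) * (((M : ℝ) - 1) * Δ)) := by
          exact mul_le_mul_of_nonneg_left hr (by positivity)
  -- arithmetic
  have hMR : (N : ℝ) < α * ((M : ℝ) - 1) := by
    have : (N : ℝ) / α < (M : ℝ) - 1 := by linarith
    calc (N : ℝ) = α * ((N : ℝ) / α) := by field_simp
      _ < α * ((M : ℝ) - 1) := by exact mul_lt_mul_of_pos_left this hα0
  have hΓR : (1 : ℝ) ≤ (Γ : ℝ) := by exact_mod_cast hΓ
  have hM1 : (1 : ℝ) < (M : ℝ) := by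
    have : (0 : ℝ) < (N : ℝ) / α := by positivity
    linarith
  have hMpos' : (0 : ℝ) < (M : ℝ) := by linarith
  -- divide hcs by M : M*Γ^2 ≤ N*Γ + N*(M-1)*Δ
  have key : (M : ℝ) * (Γ : ℝ) ^ 2 ≤ (N : ℝ) * Γ + (N : ℝ) * (((M : ℝ) - 1) * Δ) := by
    have h := hcs
    nlinarith [sq_nonneg ((M:ℝ) * Γ)]
  nlinarith [mul_lt_mul_of_pos_left hMR (by positivity : (0:ℝ) < (Γ:ℝ)),
    mul_nonneg (sub_nonneg.mpr hΓR) (mul_nonneg hα0.le (sub_nonneg.mpr hM1.le)),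
    mul_pos (sub_pos.mpr hM1) (mul_pos hα0 (sub_pos.mpr hM1)),
    sq_nonneg ((Γ:ℝ) - 1), mul_pos hα0 (sub_pos.mpr hM1)]
end

section
/- Let γ ∈ (0,1) be a real number, N ≥ 2 an integer, and Q_1, …, Q_M probability mass functions on Fin N with subsets D_1, …, D_M ⊆ Fin N. Then there exist nonempty subsets U_1, …, U_M ⊆ Fin N such that for all i ≠ j, |U_i ∩ D_j|/|U_i| ≤ Q_i(D_j) · (1+2γ)·N^γ/(γ·(1 − N^{−γ})), and for all i, |U_i \ D_i|/|U_i| ≤ Q_i(Fin N \ D_i) · (1+2γ)·N^γ/(γ·(1 − N^{−γ})). (In fact, one can choose U_i so that the uniform distribution on U_i is pointwise at most Q_i multiplied by this factor.) -/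
/-!
Take for `U_i` an upper level set `{k' | Q_i k ≤ Q_i k'}` of `Q_i`. If no upper level set `U`
satisfied `1/|U| ≤ c · Q_i` on `U`, then summing `c · Q_i k < 1/|{k' | Q_i k ≤ Q_i k'}|` over all
`k` would give `c < H_N`, since the reciprocal sizes of the upper level sets sum to at most the
harmonic number `H_N`. So any `c ≥ H_N` works, and `H_N ≤ 1 + log N` is below the stated factor
because `x + x² ≤ exp x`.
-/

open Finset

open Real

lemma add_sq_le_exp {x : ℝ} (hx : 0 ≤ x) : x + x ^ 2 ≤ exp x := by
  have h := sum_le_exp_of_nonneg hx 4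
  simp only [sum_range_succ, sum_range_zero, Nat.factorial] at h
  norm_num at h
  nlinarith [mul_nonneg hx (sq_nonneg (x - 2))]

lemma one_add_log_le_factor {γ N : ℝ} (hγ0 : 0 < γ) (hγ1 : γ ≤ 1) (hN : 1 < N) :
    1 + log N ≤ (1 + 2 * γ) * N ^ γ / (γ * (1 - N ^ (-γ))) := by
  set x := γ * log N
  have hx : 0 < x := mul_pos hγ0 (log_pos hN)
  have hpow : N ^ γ = exp x := by rw [rpow_def_of_pos (by linarith), mul_comm]
  have hpow_neg : N ^ (-γ) = exp (-x) := by
    rw [rpow_def_of_pos (by linarith), mul_neg, mul_comm]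
  have hgap : 0 < 1 - exp (-x) := by linarith [exp_lt_one_iff.mpr (neg_lt_zero.mpr hx)]
  have hgap_le : 1 - exp (-x) ≤ x := by linarith [add_one_le_exp (-x)]
  rw [hpow, hpow_neg, le_div_iff₀ (mul_pos hγ0 hgap)]
  calc (1 + log N) * (γ * (1 - exp (-x))) = (γ + x) * (1 - exp (-x)) := by ring
    _ ≤ (γ + x) * x := mul_le_mul_of_nonneg_left hgap_le (by positivity)
    _ ≤ x + x ^ 2 := by nlinarith
    _ ≤ exp x := add_sq_le_exp hx.le
    _ ≤ (1 + 2 * γ) * exp x := le_mul_of_one_le_left (exp_pos x).le (by linarith)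

lemma sum_inv_card_superlevel_le_harmonic {ι β : Type*} [DecidableEq ι] [LinearOrder β]
    (f : ι → β) (s : Finset ι) :
    ∑ a ∈ s, ((#{b ∈ s | f a ≤ f b} : ℕ) : ℝ)⁻¹ ≤ harmonic #s := by
  induction s using induction_on_min_value f with
  | empty => simp
  | insert a s ha hmin ih =>
    have hfirst : #{b ∈ insert a s | f a ≤ f b} = #s + 1 := by
      rw [filter_true_of_mem, card_insert_of_notMem ha]
      rintro b hb
      rcases mem_insert.mp hb with rfl | hb
      exacts [le_rfl, hmin b hb]
    have hrest : ∀ x ∈ s, ((#{b ∈ insert a s | f x ≤ f b} : ℕ) : ℝ)⁻¹ ≤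
        ((#{b ∈ s | f x ≤ f b} : ℕ) : ℝ)⁻¹ := by
      intro x hx
      have hpos : 0 < #{b ∈ s | f x ≤ f b} := card_pos.mpr ⟨x, by simp [hx]⟩
      refine inv_anti₀ (by exact_mod_cast hpos) ?_
      exact_mod_cast card_le_card (filter_subset_filter _ (subset_insert a s))
    rw [sum_insert ha, card_insert_of_notMem ha, hfirst, harmonic_succ]
    push_cast
    linarith [(sum_le_sum hrest).trans ih]

lemma exists_uniform_le_mul {α : Type*} [Fintype α] [DecidableEq α] {Q : α → ℝ} (hQ : IsPMF Q)
    {c : ℝ} (hc : (harmonic (Fintype.card α) : ℝ) ≤ c) :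
    ∃ U : Finset α, U.Nonempty ∧ ∀ k ∈ U, (#U : ℝ)⁻¹ ≤ Q k * c := by
  have : Nonempty α := by
    by_contra hempty
    simpa [not_nonempty_iff.mp hempty] using hQ.2
  have hc0 : 0 ≤ c := le_trans (by exact_mod_cast (harmonic_pos Fintype.card_ne_zero).le) hc
  obtain ⟨k, hk⟩ : ∃ k, ((#{k' | Q k ≤ Q k'} : ℕ) : ℝ)⁻¹ ≤ Q k * c := by
    by_contra! hlt
    have := calc c = ∑ k, Q k * c := by rw [← sum_mul, hQ.2, one_mul]
      _ < ∑ k, ((#{k' | Q k ≤ Q k'} : ℕ) : ℝ)⁻¹ :=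
          sum_lt_sum_of_nonempty univ_nonempty fun k _ => hlt k
      _ ≤ harmonic (Fintype.card α) := sum_inv_card_superlevel_le_harmonic Q univ
    linarith
  refine ⟨({k' | Q k ≤ Q k'} : Finset α), ⟨k, by simp⟩, fun k' hk' => ?_⟩
  exact hk.trans (mul_le_mul_of_nonneg_right (mem_filter.mp hk').2 hc0)

lemma card_inter_div_card_le_s14 {α : Type*} [DecidableEq α] {Q : α → ℝ} (hQ : ∀ k, 0 ≤ Q k)
    {c : ℝ} (hc : 0 ≤ c) {U : Finset α} (hU : ∀ k ∈ U, (#U : ℝ)⁻¹ ≤ Q k * c) (A : Finset α) :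
    (#(U ∩ A) : ℝ) / #U ≤ (∑ k ∈ A, Q k) * c :=
  calc (#(U ∩ A) : ℝ) / #U = ∑ _k ∈ U ∩ A, (#U : ℝ)⁻¹ := by
        rw [sum_const, nsmul_eq_mul, div_eq_mul_inv]
    _ ≤ ∑ k ∈ U ∩ A, Q k * c :=
        sum_le_sum fun k hk => hU k (mem_of_mem_inter_left hk)
    _ ≤ ∑ k ∈ A, Q k * c :=
        sum_le_sum_of_subset_of_nonneg inter_subset_right
          fun k _ _ => mul_nonneg (hQ k) hc
    _ = (∑ k ∈ A, Q k) * c := (sum_mul ..).symm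

theorem generalToUniformEncoders_general (γ : ℝ) (hγ : γ ∈ Set.Ioo (0 : ℝ) 1)
    (N M : ℕ) (hN : 2 ≤ N)
    (Q : Fin M → Fin N → ℝ) (hQ : ∀ i, IsPMF (Q i))
    (D : Fin M → Finset (Fin N)) :
    ∃ U : Fin M → Finset (Fin N),
      (∀ i, (U i).Nonempty) ∧
      (∀ i, ∀ k ∈ U i,
        ((U i).card : ℝ)⁻¹ ≤
          Q i k * ((1 + 2 * γ) * (N : ℝ) ^ γ / (γ * (1 - (N : ℝ) ^ (-γ))))) ∧
      (∀ i j, i ≠ j →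
        ((U i ∩ D j).card : ℝ) / ((U i).card : ℝ) ≤
          (∑ k ∈ D j, Q i k) * ((1 + 2 * γ) * (N : ℝ) ^ γ / (γ * (1 - (N : ℝ) ^ (-γ))))) ∧
      (∀ i,
        ((U i \ D i).card : ℝ) / ((U i).card : ℝ) ≤
          (∑ k ∈ Finset.univ \ D i, Q i k) *
            ((1 + 2 * γ) * (N : ℝ) ^ γ / (γ * (1 - (N : ℝ) ^ (-γ))))) := by
  set c := (1 + 2 * γ) * (N : ℝ) ^ γ / (γ * (1 - (N : ℝ) ^ (-γ)))
  have hharmonic : (harmonic N : ℝ) ≤ c :=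
    (harmonic_le_one_add_log N).trans
      (one_add_log_le_factor hγ.1 hγ.2.le (by exact_mod_cast hN))
  have hc : 0 ≤ c := le_trans (by exact_mod_cast (harmonic_pos (by omega : N ≠ 0)).le) hharmonic
  choose U hU_nonempty hU_le using fun i =>
    exists_uniform_le_mul (hQ i) (by simpa using hharmonic)
  refine ⟨U, hU_nonempty, hU_le, fun i j _ => ?_, fun i => ?_⟩
  · exact card_inter_div_card_le_s14 (hQ i).1 hc (hU_le i) (D j)
  · rw [sdiff_eq_inter_compl, ← compl_eq_univ_sdiff]
    exact card_inter_div_card_le_s14 (hQ i).1 hc (hU_le i) (D i)ᶜ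

/-- From general encoding distributions to uniform encoding distributions over the
noiseless channel `NL_[N]`: given `γ ∈ (0,1)` and an `(N, M)` ID code `(Q_i, D_i)`, there
are nonempty supports `U_i` such that the uniform distribution on `U_i` is pointwise at
most `Q_i` times the factor `(1+2γ)·N^γ/(γ·(1-N^{-γ}))`; consequently all error
probabilities grow by at most this factor. -/
theorem generalToUniformEncoders (γ : ℝ) (hγ : γ ∈ Set.Ioo (0 : ℝ) 1)
    (N M : ℕ) (hN : 2 ≤ N) (hM : 1 ≤ M)
    (Q : Fin M → Fin N → ℝ) (hQ : ∀ i, IsPMF (Q i))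
    (D : Fin M → Finset (Fin N)) :
    ∃ U : Fin M → Finset (Fin N),
      (∀ i, (U i).Nonempty) ∧
      (∀ i, ∀ k ∈ U i,
        ((U i).card : ℝ)⁻¹ ≤
          Q i k * ((1 + 2 * γ) * (N : ℝ) ^ γ / (γ * (1 - (N : ℝ) ^ (-γ))))) ∧
      (∀ i j, i ≠ j →
        ((U i ∩ D j).card : ℝ) / ((U i).card : ℝ) ≤
          (∑ k ∈ D j, Q i k) * ((1 + 2 * γ) * (N : ℝ) ^ γ / (γ * (1 - (N : ℝ) ^ (-γ))))) ∧
      (∀ i,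
        ((U i \ D i).card : ℝ) / ((U i).card : ℝ) ≤
          (∑ k ∈ Finset.univ \ D i, Q i k) *
            ((1 + 2 * γ) * (N : ℝ) ^ γ / (γ * (1 - (N : ℝ) ^ (-γ))))) :=
  generalToUniformEncoders_general γ hγ N M hN Q hQ D
end

section
/- Let S be a nonempty finite set and let N ≥ 1 and M ≥ 2 be integers. If M² · 2^{−2·|S|·(log₂ e)/N²} < 1 (equivalently, M² < e^{2|S|/N²}), then there exist functions f_1, …, f_M : S → Fin N such that for all i ≠ j, |{s ∈ S : f_i(s) = f_j(s)}| ≤ 2·|S|/N. (This is proved by choosing the values of the f_i independently and uniformly at random and applying the Chernoff–Hoeffding bound with Pinsker's inequality D_{KL}(2/N ‖ 1/N) ≥ 2·(1/N)²·log₂ e, followed by a union bound over pairs.) -/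
open Finset Real


lemma exp_two_lt : Real.exp 2 < 7.39 := by
  have h := Real.exp_one_lt_d9
  have h2 : Real.exp 2 = Real.exp 1 * Real.exp 1 := by
    rw [← Real.exp_add]; norm_num
  nlinarith [Real.exp_pos 1]

lemma exp_root_le (a b : ℝ) (k : ℕ) (hk : 0 < k) (hb : 0 ≤ b)
    (h : Real.exp a < b ^ k) : Real.exp (a / k) ≤ b := by
  by_contra hc
  push_neg at hc
  have h3 : Real.exp (a / k) ^ k = Real.exp a := by
    rw [← Real.exp_nat_mul]
    congr 1
    field_simp
  have := pow_lt_pow_left₀ hc hb (by omega : k ≠ 0)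
  rw [h3] at this
  linarith

lemma rpow_case (N : ℕ) (hN : 0 < N) (L : ℝ) (hL : 0 ≤ L)
    (h : L ^ N ≤ 16 * Real.exp (-2 / (N:ℝ))) :
    L ≤ (4:ℝ) ^ ((2:ℝ)/N) * Real.exp (-2 / (N:ℝ)^2) := by
  have hNpos : (0:ℝ) < N := by positivity
  apply le_of_pow_le_pow_left₀ (n := N) (by omega) (by positivity)
  rw [mul_pow]
  have h1 : ((4:ℝ) ^ ((2:ℝ)/(N:ℝ))) ^ N = 16 := by
    rw [← Real.rpow_natCast ((4:ℝ) ^ ((2:ℝ)/(N:ℝ))) N,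
      ← Real.rpow_mul (by norm_num)]
    rw [div_mul_cancel₀ _ hNpos.ne']
    norm_num
  have h2 : (Real.exp (-2 / (N:ℝ)^2)) ^ N = Real.exp (-2 / (N:ℝ)) := by
    rw [← Real.exp_nat_mul]
    congr 1
    field_simp
  rw [h1, h2]
  exact h

lemma exp_neg_ge (a b : ℝ) (hb : 0 < b) (h : Real.exp a ≤ b) :
    1 / b ≤ Real.exp (-a) := by
  rw [Real.exp_neg, ← one_div]
  exact one_div_le_one_div_of_le (Real.exp_pos a) h

lemma pertrial (N : ℕ) (hN3 : 3 ≤ N) :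
    ∃ t : ℝ, 1 ≤ t ∧
      1 + (t - 1) / N ≤ t ^ ((2:ℝ)/N) * Real.exp (-2 / (N:ℝ)^2) := by
  have hNpos : (0:ℝ) < N := by positivity
  rcases Nat.lt_or_ge N 6 with h6 | h6
  · refine ⟨4, by norm_num, ?_⟩
    interval_cases N
    · -- N = 3 : 2^3 = 8 ≤ 16 exp(-2/3), i.e. exp(2/3) ≤ 2
      apply rpow_case 3 (by norm_num) _ (by norm_num)
      have e1 : Real.exp ((2:ℝ)/3) ≤ 2 := by
        have := exp_root_le 2 2 3 (by norm_num) (by norm_num) (by nlinarith [exp_two_lt])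
        convert this using 2 <;> norm_num
      have e2 : (1:ℝ)/2 ≤ Real.exp (-((2:ℝ)/3)) := exp_neg_ge _ _ (by norm_num) e1
      have : (-2 / ((3:ℕ):ℝ)) = -((2:ℝ)/3) := by norm_num
      rw [this]
      push_cast
      nlinarith [e2]
    · -- N = 4 : (7/4)^4 ≤ 16 exp(-1/2), i.e. exp(1/2) ≤ 4096/2401
      apply rpow_case 4 (by norm_num) _ (by positivity)
      have e1 : Real.exp ((1:ℝ)/2) ≤ 4096/2401 := by
        have := exp_root_le 1 (4096/2401) 2 (by norm_num) (by norm_num)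
          (by nlinarith [Real.exp_one_lt_d9])
        convert this using 2 <;> norm_num
      have e2 : (2401:ℝ)/4096 ≤ Real.exp (-((1:ℝ)/2)) := by
        have := exp_neg_ge ((1:ℝ)/2) (4096/2401) (by norm_num) e1
        norm_num at this ⊢
        linarith
      have : (-2 / ((4:ℕ):ℝ)) = -((1:ℝ)/2) := by norm_num
      rw [this]
      push_cast
      nlinarith [e2]
    · -- N = 5 : (8/5)^5 ≤ 16 exp(-2/5), i.e. exp(2/5) ≤ 3125/2048
      apply rpow_case 5 (by norm_num) _ (by positivity)
      have e1 : Real.exp ((2:ℝ)/5) ≤ 3125/2048 := by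
        have := exp_root_le 2 (3125/2048) 5 (by norm_num) (by norm_num)
          (by nlinarith [exp_two_lt])
        convert this using 2 <;> norm_num
      have e2 : (2048:ℝ)/3125 ≤ Real.exp (-((2:ℝ)/5)) := by
        have := exp_neg_ge ((2:ℝ)/5) (3125/2048) (by norm_num) e1
        norm_num at this ⊢
        linarith
      have : (-2 / ((5:ℕ):ℝ)) = -((2:ℝ)/5) := by norm_num
      rw [this]
      push_cast
      nlinarith [e2]
  · -- N ≥ 6, t = 2
    refine ⟨2, by norm_num, ?_⟩
    have hN6 : (6:ℝ) ≤ N := by exact_mod_cast h6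
    have hlog := Real.log_two_gt_d9
    have key : 0 ≤ 2 * Real.log 2 - 2/(N:ℝ) - 1 := by
      have h13 : 2/(N:ℝ) ≤ 1/3 := by
        rw [div_le_div_iff₀ hNpos (by norm_num)]
        linarith
      linarith
    have expand : Real.log 2 * (2/(N:ℝ)) - 2/(N:ℝ)^2 - 1/(N:ℝ)
        = (2*Real.log 2 - 2/(N:ℝ) - 1)/(N:ℝ) := by
      field_simp
    have h0 : 0 ≤ (2*Real.log 2 - 2/(N:ℝ) - 1)/(N:ℝ) := div_nonneg key hNpos.le
    have hexp : 1/(N:ℝ) ≤ Real.log 2 * (2/(N:ℝ)) - 2/(N:ℝ)^2 := by linarith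
    calc 1 + ((2:ℝ) - 1) / N = 1/(N:ℝ) + 1 := by ring
      _ ≤ Real.exp (1/(N:ℝ)) := Real.add_one_le_exp _
      _ ≤ Real.exp (Real.log 2 * ((2:ℝ)/N) + (-2/(N:ℝ)^2)) := by
          apply Real.exp_le_exp.2
          linarith [show (-2:ℝ)/(N:ℝ)^2 = -(2/(N:ℝ)^2) from by ring]
      _ = (2:ℝ) ^ ((2:ℝ)/N) * Real.exp (-2 / (N:ℝ)^2) := by
          rw [Real.exp_add, Real.rpow_def_of_pos (by norm_num)]

section
variable {S : Type*} [Fintype S] [DecidableEq S] {N : ℕ}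
variable {S : Type*} [Fintype S] [DecidableEq S] {N : ℕ}

lemma sum_pow_agree (u : S → Fin N) (t : ℝ) (hN : 1 ≤ N) :
    ∑ g : S → Fin N, t ^ (univ.filter fun s => g s = u s).card
      = (t + ((N:ℝ) - 1)) ^ (Fintype.card S) := by
  classical
  have key : ∀ g : S → Fin N, t ^ (univ.filter fun s => g s = u s).card
      = ∏ s : S, (if g s = u s then t else 1) := by
    intro g
    rw [Finset.prod_ite, Finset.prod_const, Finset.prod_const_one, mul_one]
  simp_rw [key]
  rw [← Fintype.prod_sum (fun (s : S) (v : Fin N) => if v = u s then t else 1)]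
  have hs : ∀ s : S, (∑ v : Fin N, if v = u s then t else 1) = t + ((N:ℝ) - 1) := by
    intro s
    rw [← Finset.add_sum_erase _ _ (Finset.mem_univ (u s))]
    simp only [if_pos rfl]
    congr 1
    rw [Finset.sum_ite_of_false, Finset.sum_const, nsmul_eq_mul, mul_one,
      Finset.card_erase_of_mem (Finset.mem_univ _), Finset.card_univ, Fintype.card_fin,
      Nat.cast_sub hN, Nat.cast_one]
    intro v hv
    exact Finset.ne_of_mem_erase hv
  rw [Finset.prod_congr rfl (fun s _ => hs s), Finset.prod_const, Finset.card_univ]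

lemma card_bad_le (u : S → Fin N) (t K : ℝ) (ht : 1 ≤ t) (hN : 1 ≤ N) :
    ((univ.filter fun g : S → Fin N =>
        K < ((univ.filter fun s => g s = u s).card : ℝ)).card : ℝ)
      ≤ t ^ (-K) * (t + ((N:ℝ) - 1)) ^ (Fintype.card S) := by
  classical
  have ht0 : (0:ℝ) < t := lt_of_lt_of_le one_pos ht
  rw [← sum_pow_agree u t hN]
  calc ((univ.filter fun g : S → Fin N =>
        K < ((univ.filter fun s => g s = u s).card : ℝ)).card : ℝ)
      = ∑ g ∈ univ.filter (fun g : S → Fin N =>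
          K < ((univ.filter fun s => g s = u s).card : ℝ)), (1:ℝ) := by
        rw [Finset.sum_const, nsmul_eq_mul, mul_one]
    _ ≤ ∑ g ∈ univ.filter (fun g : S → Fin N =>
          K < ((univ.filter fun s => g s = u s).card : ℝ)),
          t ^ (-K) * t ^ (univ.filter fun s => g s = u s).card := by
        apply Finset.sum_le_sum
        intro g hg
        rw [Finset.mem_filter] at hg
        have h1 : t ^ (-K) * t ^ (univ.filter fun s => g s = u s).card
            = t ^ (-K + ((univ.filter fun s => g s = u s).card : ℝ)) := by
          rw [Real.rpow_add ht0, Real.rpow_natCast]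
        rw [h1]
        calc (1:ℝ) = t ^ (0:ℝ) := (Real.rpow_zero t).symm
          _ ≤ t ^ (-K + ((univ.filter fun s => g s = u s).card : ℝ)) := by
            apply Real.rpow_le_rpow_of_exponent_le ht
            linarith [hg.2]
    _ ≤ ∑ g : S → Fin N, t ^ (-K) * t ^ (univ.filter fun s => g s = u s).card := by
        apply Finset.sum_le_sum_of_subset_of_nonneg (Finset.filter_subset _ _)
        intro g _ _
        positivity
    _ = t ^ (-K) * ∑ g : S → Fin N, t ^ (univ.filter fun s => g s = u s).card := by
        rw [Finset.mul_sum]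


lemma card_bad_le_exp (hN3 : 3 ≤ N) (u : S → Fin N) :
    ((univ.filter fun g : S → Fin N =>
        2 * (Fintype.card S : ℝ) / N < ((univ.filter fun s => g s = u s).card : ℝ)).card : ℝ)
      ≤ (N:ℝ) ^ (Fintype.card S) * Real.exp (-(2 * (Fintype.card S:ℝ)) / (N:ℝ)^2) := by
  obtain ⟨t, ht, hineq⟩ := pertrial N hN3
  set n := Fintype.card S with hn
  set K : ℝ := 2 * (n:ℝ) / N with hK
  have hNpos : (0:ℝ) < N := by positivity
  have ht0 : (0:ℝ) < t := by linarith
  refine le_trans (card_bad_le u t K ht (by omega)) ?_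
  have hfact : t + ((N:ℝ)-1) = (N:ℝ) * (1 + (t-1)/N) := by field_simp; ring
  have hbase : (0:ℝ) ≤ 1 + (t-1)/N := by
    have : (0:ℝ) ≤ (t-1)/N := div_nonneg (by linarith) hNpos.le
    linarith
  have h1 : (1 + (t-1)/(N:ℝ))^n ≤ (t ^ ((2:ℝ)/N) * Real.exp (-2/(N:ℝ)^2))^n :=
    pow_le_pow_left₀ hbase hineq n
  have h2 : (t ^ ((2:ℝ)/N) * Real.exp (-2/(N:ℝ)^2))^n
      = t ^ K * Real.exp (-(2 * (n:ℝ))/(N:ℝ)^2) := by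
    rw [mul_pow, ← Real.rpow_natCast (t ^ ((2:ℝ)/N)) n, ← Real.rpow_mul ht0.le,
      ← Real.exp_nat_mul]
    congr 1
    · rw [hK]; ring
    · ring
  have hpow : (t + ((N:ℝ)-1))^n ≤ (N:ℝ)^n * (t ^ K * Real.exp (-(2*(n:ℝ))/(N:ℝ)^2)) := by
    rw [hfact, mul_pow]
    have := h2 ▸ h1
    exact mul_le_mul_of_nonneg_left this (by positivity)
  calc t ^ (-K) * (t + ((N:ℝ)-1))^n
      ≤ t ^ (-K) * ((N:ℝ)^n * (t ^ K * Real.exp (-(2*(n:ℝ))/(N:ℝ)^2))) := by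
        exact mul_le_mul_of_nonneg_left hpow (by positivity)
    _ = (t ^ (-K) * t ^ K) * ((N:ℝ)^n * Real.exp (-(2*(n:ℝ))/(N:ℝ)^2)) := by ring
    _ = (N:ℝ)^n * Real.exp (-(2*(n:ℝ))/(N:ℝ)^2) := by
        rw [← Real.rpow_add ht0, neg_add_cancel, Real.rpow_zero, one_mul]


end

open Finset

/-- Existence of a family of functions with small pairwise agreement: if
`M² · 2^(-2·|S|·(log₂ e)/N²) < 1`, then there are `f_1, …, f_M : S → Fin N` such that any
two distinct functions agree on at most `2·|S|/N` points. -/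
theorem smallPairwiseAgreementFamily {S : Type*} [Fintype S] [Nonempty S]
    (N M : ℕ) (hN : 1 ≤ N) (hM : 2 ≤ M)
    (h : (M : ℝ) ^ 2 *
        (2 : ℝ) ^ (-(2 * (Fintype.card S : ℝ) * Real.logb 2 (Real.exp 1)) / (N : ℝ) ^ 2)
      < 1) :
    ∃ f : Fin M → S → Fin N,
      ∀ i j, i ≠ j →
        (((Finset.univ.filter fun s => f i s = f j s).card : ℝ) ≤
          2 * (Fintype.card S : ℝ) / (N : ℝ)) := by
  classical
  set n := Fintype.card S with hn
  have hNpos : (0:ℝ) < N := by positivity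
  -- trivial case N ≤ 2
  rcases Nat.lt_or_ge N 3 with hN2 | hN3
  · have h2 : (n:ℝ) ≤ 2 * (n:ℝ) / N := by
      rw [le_div_iff₀ hNpos]
      have hle : (N:ℝ) ≤ 2 := by exact_mod_cast Nat.le_of_lt_succ hN2
      nlinarith [Nat.cast_nonneg (α := ℝ) n]
    refine ⟨fun _ _ => ⟨0, by omega⟩, fun i j _ => le_trans ?_ h2⟩
    exact_mod_cast le_trans (Finset.card_filter_le _ _) (le_of_eq Finset.card_univ)
  -- rewrite hypothesis into exp form
  have hlog2 : Real.log 2 ≠ 0 := ne_of_gt (Real.log_pos (by norm_num))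
  have hrw : (2 : ℝ) ^ (-(2 * (n : ℝ) * Real.logb 2 (Real.exp 1)) / (N : ℝ) ^ 2)
      = Real.exp (-(2 * (n:ℝ)) / (N:ℝ)^2) := by
    rw [Real.rpow_def_of_pos (by norm_num : (0:ℝ) < 2)]
    congr 1
    rw [Real.logb, Real.log_exp]
    field_simp
  rw [hrw] at h
  set E : ℝ := Real.exp (-(2 * (n:ℝ)) / (N:ℝ)^2) with hE
  have hEpos : 0 < E := Real.exp_pos _
  -- greedy construction
  have main : ∀ m : ℕ, m ≤ M → ∃ f : Fin m → S → Fin N,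
      ∀ i j, i ≠ j →
        (((univ.filter fun s => f i s = f j s).card : ℝ) ≤ 2 * (n : ℝ) / (N : ℝ)) := by
    intro m
    induction m with
    | zero => exact fun _ => ⟨Fin.elim0, fun i => i.elim0⟩
    | succ m ih =>
      intro hm1
      obtain ⟨f, hf⟩ := ih (by omega)
      set Bad : Fin m → Finset (S → Fin N) := fun i => univ.filter
        (fun g => 2 * (n:ℝ) / N < ((univ.filter fun s => g s = f i s).card : ℝ)) with hBad
      have hcard : ((univ.biUnion Bad).card : ℝ) < ((N:ℝ) ^ n) := by
        calc ((univ.biUnion Bad).card : ℝ)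
            ≤ ∑ i : Fin m, ((Bad i).card : ℝ) := by
              exact_mod_cast Nat.cast_le.2 (Finset.card_biUnion_le)
          _ ≤ ∑ _i : Fin m, (N:ℝ) ^ n * E := by
              apply Finset.sum_le_sum
              intro i _
              exact card_bad_le_exp hN3 (f i)
          _ = (m:ℝ) * ((N:ℝ)^n * E) := by
              rw [Finset.sum_const, card_univ, Fintype.card_fin, nsmul_eq_mul]
          _ < (N:ℝ) ^ n := by
              have hm : (m:ℝ) ≤ (M:ℝ)^2 := by
                have h1 : (m:ℕ) ≤ M^2 := le_trans (by omega) (Nat.le_self_pow (by norm_num) M)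
                exact_mod_cast h1
              have : (m:ℝ) * E < 1 := lt_of_le_of_lt
                (mul_le_mul_of_nonneg_right hm hEpos.le) h
              nlinarith [pow_pos hNpos n]
      have hcf : (Fintype.card (S → Fin N) : ℝ) = (N:ℝ)^n := by
        rw [Fintype.card_fun, Fintype.card_fin]
        push_cast
        ring
      have hNe : (univ \ univ.biUnion Bad).Nonempty := by
        rw [Finset.sdiff_nonempty]
        intro hsub
        have h1 : Fintype.card (S → Fin N) ≤ (univ.biUnion Bad).card := by
          simpa [Finset.card_univ] using Finset.card_le_card hsub
        have h2 : ((Fintype.card (S → Fin N)) : ℝ) ≤ ((univ.biUnion Bad).card : ℝ) := by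
          exact_mod_cast h1
        rw [hcf] at h2
        linarith
      obtain ⟨g, hg⟩ := hNe
      rw [Finset.mem_sdiff] at hg
      have hgood : ∀ i : Fin m,
          ((univ.filter fun s => g s = f i s).card : ℝ) ≤ 2 * (n:ℝ) / N := by
        intro i
        by_contra hc
        push_neg at hc
        exact hg.2 (Finset.mem_biUnion.2 ⟨i, Finset.mem_univ _,
          Finset.mem_filter.2 ⟨Finset.mem_univ _, hc⟩⟩)
      refine ⟨Fin.snoc f g, ?_⟩
      have hsymm : ∀ a b : S → Fin N,
          (univ.filter fun s => a s = b s) = (univ.filter fun s => b s = a s) := by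
        intro a b
        ext s
        simp [eq_comm]
      intro i j
      refine Fin.lastCases ?_ (fun i' => ?_) i
      · refine Fin.lastCases ?_ (fun j' => ?_) j
        · intro hne
          exact absurd rfl hne
        · intro _
          simp only [Fin.snoc_last, Fin.snoc_castSucc]
          exact hgood j'
      · refine Fin.lastCases ?_ (fun j' => ?_) j
        · intro _
          simp only [Fin.snoc_last, Fin.snoc_castSucc]
          rw [hsymm]
          exact hgood i'
        · intro hne
          simp only [Fin.snoc_castSucc]
          exact hf i' j' (fun hc => hne (by rw [hc]))
  obtain ⟨f, hf⟩ := main M le_rfl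
  exact ⟨f, hf⟩
end
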